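/- arXiv:math/0601711 — 2 statements merged into one kernel-verified Lean document; each statement's English description precedes it below -/
import Mathlib

section
/- Let T_i = (P_i, x_i), i = 0,…,m, be elements of 𝒫_k × ℝⁿ with δ_ω(T_i, T_{i+1}) ≤ ω(‖x_i − x_{i+1}‖) for all i, and suppose for some λ ≥ 1 that Σ_{i=0}^{m−1} ‖x_i − x_{i+1}‖ ≤ λ‖x₀ − x_m‖ and Σ_{i=0}^{m−1} ω(‖x_i − x_{i+1}‖) ≤ λ ω(‖x₀ − x_m‖). Then δ_ω(τ^{−1}∘T₀, τ^{−1}∘T_m) ≤ ω(‖x₀ − x_m‖), where τ := e^{2n} λ^{k+1}. -/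
open MvPolynomial

/-- Iterated partial derivative `D^α` of a multivariate polynomial. -/
noncomputable def mderiv {n : ℕ} (α : Fin n → ℕ) (P : MvPolynomial (Fin n) ℝ) :
    MvPolynomial (Fin n) ℝ :=
  (List.finRange n).foldl (fun Q i => (MvPolynomial.pderiv i)^[α i] Q) P

/-- The finite set of multi-indices `β ∈ ℕⁿ` with `|β| ≤ m`. -/
def multiIndices (n m : ℕ) : Finset (Fin n → ℕ) :=
  (Fintype.piFinset fun _ : Fin n => Finset.range (m + 1)).filter fun β => (∑ i, β i) ≤ m

lemma multiIndices_nonempty (n m : ℕ) : (multiIndices n m).Nonempty :=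
  ⟨fun _ => 0, by simp [multiIndices]⟩

/-- `ψ_m`: the inverse of `s ↦ s^m * ω s` on `[0,∞)`. -/
noncomputable def psiInv (ω : ℝ → ℝ) (m : ℕ) (t : ℝ) : ℝ :=
  Function.invFunOn (fun s => s ^ m * ω s) (Set.Ici 0) t

/-- `φ_α` for a multi-index of order `a`: `ω ∘ ψ_{k-a}` if `a < k`, identity if `a = k`. -/
noncomputable def phiOm (ω : ℝ → ℝ) (k a : ℕ) (t : ℝ) : ℝ :=
  if a < k then ω (psiInv ω (k - a) t) else t

/-- The quantity `d_ω(T,T')` on the space of `k`-jets `𝒫_k × ℝⁿ`. -/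
noncomputable def dOm (ω : ℝ → ℝ) {n : ℕ} (k : ℕ)
    (T T' : MvPolynomial (Fin n) ℝ × EuclideanSpace ℝ (Fin n)) : ℝ :=
  (multiIndices n k).sup' (multiIndices_nonempty n k) fun α =>
    max (ω ‖T.2 - T'.2‖)
      (max (phiOm ω k (∑ i, α i)
              |MvPolynomial.eval (fun i => T.2 i) (mderiv α (T.1 - T'.1))|)
           (phiOm ω k (∑ i, α i)
              |MvPolynomial.eval (fun i => T'.2 i) (mderiv α (T.1 - T'.1))|))

/-- The chain ("geodesic") metric `δ_ω` generated by `d_ω`, where chains run through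
jets whose polynomial components have degree at most `k`. -/
noncomputable def delOm (ω : ℝ → ℝ) {n : ℕ} (k : ℕ)
    (T T' : MvPolynomial (Fin n) ℝ × EuclideanSpace ℝ (Fin n)) : ℝ :=
  sInf { r | ∃ (m : ℕ) (c : ℕ → MvPolynomial (Fin n) ℝ × EuclideanSpace ℝ (Fin n)),
    c 0 = T ∧ c m = T' ∧ (∀ i ≤ m, (c i).1.totalDegree ≤ k) ∧
    r = ∑ i ∈ Finset.range m, dOm ω k (c i) (c (i + 1)) }

/-- Dilation `λ ∘ (P,x) := (λP, x)` of a jet. -/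
noncomputable def scaleJet {n : ℕ} (l : ℝ)
    (T : MvPolynomial (Fin n) ℝ × EuclideanSpace ℝ (Fin n)) :
    MvPolynomial (Fin n) ℝ × EuclideanSpace ℝ (Fin n) :=
  (l • T.1, T.2)


namespace Aux
set_option linter.unusedSectionVars false

variable {n : ℕ}

lemma iter_pderiv_add (i : Fin n) (b : ℕ) (P Q : MvPolynomial (Fin n) ℝ) :
    (pderiv i)^[b] (P + Q) = (pderiv i)^[b] P + (pderiv i)^[b] Q := by
  induction b generalizing P Q with
  | zero => simp
  | succ b ih => simp [Function.iterate_succ_apply, map_add, ih]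

lemma iter_pderiv_smul (i : Fin n) (b : ℕ) (r : ℝ) (P : MvPolynomial (Fin n) ℝ) :
    (pderiv i)^[b] (r • P) = r • (pderiv i)^[b] P := by
  induction b generalizing P with
  | zero => simp
  | succ b ih => simp [Function.iterate_succ_apply, map_smul, ih]

lemma mderiv_foldl (α : Fin n → ℕ) (P : MvPolynomial (Fin n) ℝ) :
    mderiv α P = (List.finRange n).foldl (fun Q i => (pderiv i)^[α i] Q) P := rfl

lemma foldl_add (l : List (Fin n)) (α : Fin n → ℕ) (P Q : MvPolynomial (Fin n) ℝ) :
    l.foldl (fun Q i => (pderiv i)^[α i] Q) (P + Q)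
      = l.foldl (fun Q i => (pderiv i)^[α i] Q) P + l.foldl (fun Q i => (pderiv i)^[α i] Q) Q := by
  induction l generalizing P Q with
  | nil => simp
  | cons a l ih => simp [List.foldl_cons, iter_pderiv_add, ih]

lemma mderiv_add (α : Fin n → ℕ) (P Q : MvPolynomial (Fin n) ℝ) :
    mderiv α (P + Q) = mderiv α P + mderiv α Q := foldl_add _ _ _ _

lemma foldl_smul (l : List (Fin n)) (α : Fin n → ℕ) (r : ℝ) (P : MvPolynomial (Fin n) ℝ) :
    l.foldl (fun Q i => (pderiv i)^[α i] Q) (r • P)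
      = r • l.foldl (fun Q i => (pderiv i)^[α i] Q) P := by
  induction l generalizing P with
  | nil => simp
  | cons a l ih => simp [List.foldl_cons, iter_pderiv_smul, ih]

lemma mderiv_smul (α : Fin n → ℕ) (r : ℝ) (P : MvPolynomial (Fin n) ℝ) :
    mderiv α (r • P) = r • mderiv α P := foldl_smul _ _ _ _

lemma mderiv_zero (α : Fin n → ℕ) : mderiv α (0 : MvPolynomial (Fin n) ℝ) = 0 := by
  have := mderiv_smul α 0 0
  simpa using this

lemma mderiv_sub (α : Fin n → ℕ) (P Q : MvPolynomial (Fin n) ℝ) :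
    mderiv α (P - Q) = mderiv α P - mderiv α Q := by
  have h := mderiv_add α (P - Q) Q
  rw [sub_add_cancel] at h
  rw [eq_sub_iff_add_eq, h]

lemma mderiv_sum {ι : Type*} (s : Finset ι) (f : ι → MvPolynomial (Fin n) ℝ) (α : Fin n → ℕ) :
    mderiv α (∑ x ∈ s, f x) = ∑ x ∈ s, mderiv α (f x) := by
  induction s using Finset.cons_induction with
  | empty => simpa using mderiv_zero α
  | cons a s ha ih => simp [Finset.sum_cons, mderiv_add, ih]


/-- `bar β` : the finsupp version of a multiindex. -/
noncomputable def bar (β : Fin n → ℕ) : Fin n →₀ ℕ := ∑ i, Finsupp.single i (β i)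

lemma bar_apply (β : Fin n → ℕ) (j : Fin n) : bar β j = β j := by
  classical
  simp [bar, Finsupp.finset_sum_apply, Finsupp.single_apply]

lemma bar_add (α β : Fin n → ℕ) : bar (fun i => α i + β i) = bar α + bar β := by
  ext j; simp [bar_apply]

lemma desc_add (u a b : ℕ) :
    u.descFactorial (a + b) = u.descFactorial a * (u - a).descFactorial b := by
  induction b with
  | zero => simp
  | succ b ih =>
      rw [show a + (b+1) = (a+b) + 1 by ring, Nat.descFactorial_succ, ih,
        Nat.descFactorial_succ, Nat.sub_sub]
      ring

lemma iter_pderiv_monomial (i : Fin n) (b : ℕ) (u : Fin n →₀ ℕ) (c : ℝ) :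
    (pderiv i)^[b] (monomial u c)
      = monomial (u - Finsupp.single i b) (c * (u i).descFactorial b) := by
  induction b with
  | zero => simp
  | succ b ih =>
      rw [Function.iterate_succ_apply', ih, pderiv_monomial]
      congr 1
      · rw [tsub_tsub, ← Finsupp.single_add]
      · have h1 : (u - Finsupp.single i b) i = u i - b := by
          rw [Finsupp.tsub_apply, Finsupp.single_eq_same]
        rw [h1, Nat.descFactorial_succ, Nat.cast_mul]
        ring

lemma foldl_monomial (β : Fin n → ℕ) :
    ∀ (l : List (Fin n)), l.Nodup → ∀ (u : Fin n →₀ ℕ) (c : ℝ),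
    l.foldl (fun Q i => (pderiv i)^[β i] Q) (monomial u c)
      = monomial (u - (l.map (fun i => Finsupp.single i (β i))).sum)
          (c * (l.map (fun i => ((u i).descFactorial (β i) : ℝ))).prod) := by
  intro l
  induction l with
  | nil => intro _ u c; simp
  | cons a l ih =>
      intro hnd u c
      obtain ⟨ha, hl⟩ := List.nodup_cons.mp hnd
      rw [List.foldl_cons, iter_pderiv_monomial, ih hl]
      congr 1
      · rw [List.map_cons, List.sum_cons, tsub_tsub]
      · rw [List.map_cons, List.prod_cons]
        have : ∀ i ∈ l, ((((u - Finsupp.single a (β a)) i).descFactorial (β i) : ℝ))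
            = ((u i).descFactorial (β i) : ℝ) := by
          intro i hi
          have hia : a ≠ i := fun h => ha (h ▸ hi)
          rw [Finsupp.tsub_apply, Finsupp.single_apply, if_neg hia]
          simp
        rw [List.map_congr_left this]
        ring

lemma mderiv_monomial (β : Fin n → ℕ) (u : Fin n →₀ ℕ) (c : ℝ) :
    mderiv β (monomial u c)
      = monomial (u - bar β) (c * ∏ i, ((u i).descFactorial (β i) : ℝ)) := by
  rw [mderiv_foldl, foldl_monomial β (List.finRange n) (List.nodup_finRange n), bar,
    Fin.sum_univ_def (fun i => Finsupp.single i (β i)),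
    Fin.prod_univ_def (fun i => ((u i).descFactorial (β i) : ℝ))]

lemma mderiv_mderiv (α β : Fin n → ℕ) (P : MvPolynomial (Fin n) ℝ) :
    mderiv β (mderiv α P) = mderiv (fun i => α i + β i) P := by
  conv_lhs => rw [← MvPolynomial.support_sum_monomial_coeff P]
  conv_rhs => rw [← MvPolynomial.support_sum_monomial_coeff P]
  rw [mderiv_sum, mderiv_sum, mderiv_sum]
  apply Finset.sum_congr rfl
  intro u _
  rw [mderiv_monomial, mderiv_monomial, mderiv_monomial, bar_add, ← tsub_tsub]
  by_cases hle : ∀ i, α i ≤ u i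
  · congr 1
    · have : ∀ i, (u - bar α) i = u i - α i := fun i => by
        rw [Finsupp.tsub_apply, bar_apply]
      rw [mul_assoc, ← Finset.prod_mul_distrib]
      congr 1
      apply Finset.prod_congr rfl
      intro i _
      rw [this i, ← Nat.cast_mul, ← desc_add]
  · push_neg at hle
    obtain ⟨i, hi⟩ := hle
    have h1 : ((u i).descFactorial (α i) : ℝ) = 0 := by
      rw [Nat.cast_eq_zero, Nat.descFactorial_eq_zero_iff_lt]; exact hi
    have h2 : ((u i).descFactorial (α i + β i) : ℝ) = 0 := by
      rw [Nat.cast_eq_zero, Nat.descFactorial_eq_zero_iff_lt]; omega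
    rw [Finset.prod_eq_zero (f := fun j => ((u j).descFactorial (α j) : ℝ))
        (Finset.mem_univ i) h1,
      Finset.prod_eq_zero (f := fun j => ((u j).descFactorial (α j + β j) : ℝ))
        (Finset.mem_univ i) h2]
    simp

lemma mderiv_eq_zero_of_totalDegree_lt (α : Fin n → ℕ) (P : MvPolynomial (Fin n) ℝ)
    (h : P.totalDegree < ∑ i, α i) : mderiv α P = 0 := by
  conv_lhs => rw [← MvPolynomial.support_sum_monomial_coeff P]
  rw [mderiv_sum]
  apply Finset.sum_eq_zero
  intro u hu
  rw [mderiv_monomial]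
  by_cases hle : ∀ i, α i ≤ u i
  · exfalso
    have h1 : (∑ i, α i) ≤ ∑ i, u i := Finset.sum_le_sum (fun i _ => hle i)
    have h2 : (u.sum fun _ e => e) ≤ P.totalDegree := MvPolynomial.le_totalDegree hu
    rw [Finsupp.sum_fintype _ _ (fun _ => rfl)] at h2
    omega
  · push_neg at hle
    obtain ⟨i, hi⟩ := hle
    have h1 : ((u i).descFactorial (α i) : ℝ) = 0 := by
      rw [Nat.cast_eq_zero, Nat.descFactorial_eq_zero_iff_lt]; exact hi
    rw [Finset.prod_eq_zero (Finset.mem_univ i) h1]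
    simp

lemma totalDegree_mderiv_le (α : Fin n → ℕ) (P : MvPolynomial (Fin n) ℝ) :
    (mderiv α P).totalDegree ≤ P.totalDegree - ∑ i, α i := by
  conv_lhs => rw [← MvPolynomial.support_sum_monomial_coeff P]
  rw [mderiv_sum]
  refine le_trans (MvPolynomial.totalDegree_finset_sum _ _) ?_
  apply Finset.sup_le
  intro u hu
  rw [mderiv_monomial]
  by_cases hc : coeff u P * ∏ i, ((u i).descFactorial (α i) : ℝ) = 0
  · rw [hc]; simp
  · rw [MvPolynomial.totalDegree_monomial _ hc]
    have hle : ∀ i, α i ≤ u i := by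
      intro i
      by_contra hi
      push_neg at hi
      have h1 : ((u i).descFactorial (α i) : ℝ) = 0 := by
        rw [Nat.cast_eq_zero, Nat.descFactorial_eq_zero_iff_lt]; exact hi
      exact hc (by rw [Finset.prod_eq_zero (Finset.mem_univ i) h1]; ring)
    have h2 : (u.sum fun _ e => e) ≤ P.totalDegree := MvPolynomial.le_totalDegree hu
    rw [Finsupp.sum_fintype _ _ (fun _ => rfl)] at h2
    have h3 : ((u - bar α).sum fun _ e => e) = ∑ i, (u i - α i) := by
      rw [Finsupp.sum_fintype _ _ (fun _ => rfl)]
      apply Finset.sum_congr rfl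
      intro i _
      rw [Finsupp.tsub_apply, bar_apply]
    rw [h3]
    have h4 : ∑ i, (u i - α i) = (∑ i, u i) - ∑ i, α i :=
      Finset.sum_tsub_distrib Finset.univ (fun i _ => hle i)
    rw [h4]
    exact tsub_le_tsub_right h2 _

lemma taylor_monomial (K : ℕ) (u : Fin n →₀ ℕ) (hu : (∑ i, u i) ≤ K) (c : ℝ)
    (z y : Fin n → ℝ) :
    eval y (monomial u c)
      = ∑ β ∈ Fintype.piFinset (fun _ : Fin n => Finset.range (K+1)),
          eval z (mderiv β (monomial u c))
            * ∏ i, ((y i - z i) ^ (β i) / ((β i).factorial : ℝ)) := by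
  classical
  have key : ∀ i : Fin n,
      (y i) ^ (u i) = ∑ b ∈ Finset.range (K+1),
        ((u i).choose b : ℝ) * (z i) ^ (u i - b) * (y i - z i) ^ b := by
    intro i
    have hui : u i ≤ K := le_trans (Finset.single_le_sum (f := fun j => u j)
      (fun j _ => Nat.zero_le _) (Finset.mem_univ i)) hu
    have h1 : (y i) ^ (u i) = ((y i - z i) + z i) ^ (u i) := by ring_nf
    rw [h1, add_pow]
    rw [Finset.sum_subset (show Finset.range (u i + 1) ⊆ Finset.range (K+1) from
      Finset.range_subset_range.mpr (by omega))]
    · apply Finset.sum_congr rfl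
      intro b _
      ring
    · intro b _ hb
      have : u i < b := by
        simp only [Finset.mem_range, not_lt] at hb ⊢
        omega
      rw [Nat.choose_eq_zero_of_lt this]
      simp
  calc eval y (monomial u c)
      = c * ∏ i, (y i) ^ (u i) := by
        rw [eval_monomial, Finsupp.prod_fintype _ _ (fun _ => pow_zero _)]
    _ = c * ∏ i, (∑ b ∈ Finset.range (K+1),
          ((u i).choose b : ℝ) * (z i) ^ (u i - b) * (y i - z i) ^ b) := by
        rw [Finset.prod_congr rfl (fun i _ => key i)]
    _ = c * ∑ β ∈ Fintype.piFinset (fun _ : Fin n => Finset.range (K+1)),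
          ∏ i, (((u i).choose (β i) : ℝ) * (z i) ^ (u i - β i) * (y i - z i) ^ (β i)) := by
        rw [Finset.prod_univ_sum]
    _ = _ := by
        rw [Finset.mul_sum]
        apply Finset.sum_congr rfl
        intro β _
        rw [mderiv_monomial, eval_monomial, Finsupp.prod_fintype _ _ (fun _ => pow_zero _)]
        have hz : ∀ i : Fin n, (z i) ^ ((u - bar β) i) = (z i) ^ (u i - β i) := by
          intro i; rw [Finsupp.tsub_apply, bar_apply]
        rw [Finset.prod_congr rfl (fun i _ => hz i)]
        have hper : ∀ i : Fin n,
            ((u i).choose (β i) : ℝ) * (z i) ^ (u i - β i) * (y i - z i) ^ (β i)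
            = ((u i).descFactorial (β i) : ℝ) * (z i) ^ (u i - β i)
                * ((y i - z i) ^ (β i) / ((β i).factorial : ℝ)) := by
          intro i
          rw [Nat.descFactorial_eq_factorial_mul_choose, Nat.cast_mul]
          have hf : ((β i).factorial : ℝ) ≠ 0 :=
            (Nat.cast_pos.mpr (Nat.factorial_pos _)).ne'
          field_simp
        rw [Finset.prod_congr rfl (fun i _ => hper i), Finset.prod_mul_distrib,
          Finset.prod_mul_distrib]
        ring

lemma taylor (K : ℕ) (Q : MvPolynomial (Fin n) ℝ) (hQ : Q.totalDegree ≤ K)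
    (z y : Fin n → ℝ) :
    eval y Q = ∑ β ∈ Fintype.piFinset (fun _ : Fin n => Finset.range (K+1)),
        eval z (mderiv β Q) * ∏ i, ((y i - z i) ^ (β i) / ((β i).factorial : ℝ)) := by
  conv_lhs => rw [← MvPolynomial.support_sum_monomial_coeff Q]
  rw [map_sum]
  have : ∀ β, mderiv β Q = ∑ u ∈ Q.support, mderiv β (monomial u (coeff u Q)) := by
    intro β
    conv_lhs => rw [← MvPolynomial.support_sum_monomial_coeff Q]
    rw [mderiv_sum]
  calc ∑ u ∈ Q.support, eval y (monomial u (coeff u Q))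
      = ∑ u ∈ Q.support, ∑ β ∈ Fintype.piFinset (fun _ : Fin n => Finset.range (K+1)),
          eval z (mderiv β (monomial u (coeff u Q)))
            * ∏ i, ((y i - z i) ^ (β i) / ((β i).factorial : ℝ)) := by
        apply Finset.sum_congr rfl
        intro u hu
        apply taylor_monomial
        have h2 : (u.sum fun _ e => e) ≤ Q.totalDegree := MvPolynomial.le_totalDegree hu
        rw [Finsupp.sum_fintype _ _ (fun _ => rfl)] at h2
        omega
    _ = _ := by
        rw [Finset.sum_comm]
        apply Finset.sum_congr rfl
        intro β _
        rw [this β, map_sum, Finset.sum_mul]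

section OmegaFacts
variable {ω : ℝ → ℝ}
variable (hnn : ∀ t, 0 ≤ t → 0 ≤ ω t)
variable (hcont : ContinuousOn ω (Set.Ici 0))
variable (hmono : StrictMonoOn ω (Set.Ici 0))
variable (hconc : ConcaveOn ℝ (Set.Ici 0) ω)
variable (h0 : ω 0 = 0)

include hconc h0 in
lemma omega_subadd {a b : ℝ} (ha : 0 ≤ a) (hb : 0 ≤ b) : ω (a + b) ≤ ω a + ω b := by
  rcases eq_or_lt_of_le (add_nonneg ha hb) with hs | hs
  · have ha0 : a = 0 := by linarith [hs]
    have hb0 : b = 0 := by linarith [hs]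
    simp [ha0, hb0, h0]
  · set s := a + b with hsdef
    have h1 : ω a ≥ (a/s) * ω s := by
      have := hconc.2 (Set.mem_Ici.mpr (le_of_lt hs)) (Set.mem_Ici.mpr (le_refl 0))
        (div_nonneg ha hs.le) (div_nonneg hb hs.le) (by field_simp; exact hsdef.symm)
      simp only [smul_eq_mul, h0, mul_zero, add_zero] at this
      have harg : a / s * s = a := div_mul_cancel₀ a hs.ne'
      rw [harg] at this
      linarith
    have h2 : ω b ≥ (b/s) * ω s := by
      have := hconc.2 (Set.mem_Ici.mpr (le_of_lt hs)) (Set.mem_Ici.mpr (le_refl 0))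
        (div_nonneg hb hs.le) (div_nonneg ha hs.le) (by field_simp; linarith)
      simp only [smul_eq_mul, h0, mul_zero, add_zero] at this
      have harg : b / s * s = b := div_mul_cancel₀ b hs.ne'
      rw [harg] at this
      linarith
    have : (a/s) * ω s + (b/s) * ω s = ω s := by field_simp; ring
    linarith

include hconc h0 in
lemma omega_sum_le {N : ℕ} {f : ℕ → ℝ} (hf : ∀ j < N, 0 ≤ f j) :
    ω (∑ j ∈ Finset.range N, f j) ≤ ∑ j ∈ Finset.range N, ω (f j) := by
  induction N with
  | zero => simp [h0]
  | succ N ih =>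
      rw [Finset.sum_range_succ, Finset.sum_range_succ]
      have h1 : 0 ≤ ∑ j ∈ Finset.range N, f j :=
        Finset.sum_nonneg (fun j hj => hf j (by simp at hj; omega))
      calc ω (∑ j ∈ Finset.range N, f j + f N)
          ≤ ω (∑ j ∈ Finset.range N, f j) + ω (f N) :=
            omega_subadd hconc h0 h1 (hf N (by omega))
        _ ≤ _ := by
            have := ih (fun j hj => hf j (by omega))
            linarith

include hmono in
lemma lt_of_omega_lt {a b : ℝ} (ha : 0 ≤ a) (hb : 0 ≤ b) (h : ω a < ω b) : a < b := by
  by_contra hab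
  push_neg at hab
  exact absurd (hmono.monotoneOn (Set.mem_Ici.mpr hb) (Set.mem_Ici.mpr ha) hab) (not_le.mpr h)

include hmono in
lemma le_of_omega_le {a b : ℝ} (ha : 0 ≤ a) (hb : 0 ≤ b) (h : ω a ≤ ω b) : a ≤ b := by
  by_contra hab
  push_neg at hab
  exact absurd (hmono (Set.mem_Ici.mpr hb) (Set.mem_Ici.mpr ha) hab) (not_lt.mpr h)

include hnn hmono in
lemma fM_strictMono {M : ℕ} (hM : 1 ≤ M) (h0 : ω 0 = 0) :
    StrictMonoOn (fun s => s ^ M * ω s) (Set.Ici 0) := by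
  intro x hx y hy hxy
  simp only [Set.mem_Ici] at hx hy
  show x ^ M * ω x < y ^ M * ω y
  rcases eq_or_lt_of_le hx with hx0 | hx0
  · have hy0 : 0 < y := lt_of_le_of_lt hx hxy
    have hωy : 0 < ω y := by
      have := hmono (Set.mem_Ici.mpr (le_refl 0)) (Set.mem_Ici.mpr hy0.le) hy0
      rw [h0] at this; exact this
    rw [← hx0, h0, mul_zero]
    positivity
  · have hωx : 0 < ω x := by
      have := hmono (Set.mem_Ici.mpr (le_refl 0)) (Set.mem_Ici.mpr hx) hx0
      rw [h0] at this; exact this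
    have hωy : ω x < ω y := hmono (Set.mem_Ici.mpr hx) (Set.mem_Ici.mpr hy) hxy
    have h1 : x ^ M * ω x < x ^ M * ω y := by
      apply mul_lt_mul_of_pos_left hωy (by positivity)
    have h2 : x ^ M * ω y ≤ y ^ M * ω y := by
      apply mul_le_mul_of_nonneg_right (pow_le_pow_left₀ hx hxy.le M) (by linarith)
    linarith

include hnn hcont hmono h0 in
lemma fM_surj {M : ℕ} (hM : 1 ≤ M) {t : ℝ} (ht : 0 ≤ t) :
    ∃ s ∈ Set.Ici (0:ℝ), s ^ M * ω s = t := by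
  have hω1 : 0 < ω 1 := by
    have := hmono (Set.mem_Ici.mpr (le_refl 0)) (Set.mem_Ici.mpr zero_le_one) one_pos
    rw [h0] at this; exact this
  set b : ℝ := max 1 (t / ω 1) with hb
  have hb1 : (1:ℝ) ≤ b := le_max_left _ _
  have hb0 : (0:ℝ) ≤ b := by linarith
  have hfb : t ≤ b ^ M * ω b := by
    have h1 : b ≤ b ^ M := le_self_pow₀ (by linarith) (by omega)
    have h2 : ω 1 ≤ ω b := hmono.monotoneOn (Set.mem_Ici.mpr zero_le_one)
      (Set.mem_Ici.mpr hb0) hb1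
    have h3 : t / ω 1 ≤ b := le_max_right _ _
    calc t = (t / ω 1) * ω 1 := by field_simp
      _ ≤ b * ω 1 := mul_le_mul_of_nonneg_right h3 hω1.le
      _ ≤ b ^ M * ω 1 := mul_le_mul_of_nonneg_right h1 hω1.le
      _ ≤ b ^ M * ω b := mul_le_mul_of_nonneg_left h2 (by positivity)
  have hcont' : ContinuousOn (fun s => s ^ M * ω s) (Set.Icc 0 b) :=
    ((continuousOn_pow M).mul (hcont.mono (Set.Icc_subset_Ici_self)))
  have hIVT := intermediate_value_Icc hb0 hcont'
  have hmem : t ∈ Set.Icc ((fun s => s ^ M * ω s) 0) ((fun s => s ^ M * ω s) b) := by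
    constructor
    · simp only
      rw [zero_pow (by omega : M ≠ 0), zero_mul]
      exact ht
    · exact hfb
  obtain ⟨s, hs, hfs⟩ := hIVT hmem
  exact ⟨s, Set.mem_Ici.mpr hs.1, hfs⟩

include hnn hcont hmono h0 in
lemma psiInv_spec {M : ℕ} (hM : 1 ≤ M) {t : ℝ} (ht : 0 ≤ t) :
    psiInv ω M t ∈ Set.Ici (0:ℝ) ∧ (psiInv ω M t) ^ M * ω (psiInv ω M t) = t := by
  obtain ⟨s, hs, hfs⟩ := fM_surj hnn hcont hmono h0 hM ht
  refine ⟨Function.invFunOn_mem ⟨s, hs, hfs⟩, ?_⟩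
  have h2 := Function.invFunOn_eq (f := fun u => u ^ M * ω u) (s := Set.Ici 0) ⟨s, hs, hfs⟩
  simpa [psiInv] using h2

include hnn hcont hmono h0 in
lemma psiInv_fM {M : ℕ} (hM : 1 ≤ M) {s : ℝ} (hs : 0 ≤ s) :
    psiInv ω M (s ^ M * ω s) = s := by
  have ht : 0 ≤ s ^ M * ω s := mul_nonneg (by positivity) (hnn s hs)
  obtain ⟨hmem, heq⟩ := psiInv_spec hnn hcont hmono h0 hM ht
  exact (fM_strictMono hnn hmono hM h0).injOn hmem (Set.mem_Ici.mpr hs) heq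

include hnn hcont hmono h0 in
lemma psiInv_mono {M : ℕ} (hM : 1 ≤ M) {t t' : ℝ} (ht : 0 ≤ t) (ht' : 0 ≤ t')
    (htt : t ≤ t') : psiInv ω M t ≤ psiInv ω M t' := by
  obtain ⟨hm1, he1⟩ := psiInv_spec hnn hcont hmono h0 hM ht
  obtain ⟨hm2, he2⟩ := psiInv_spec hnn hcont hmono h0 hM ht'
  by_contra hlt
  push_neg at hlt
  have := fM_strictMono hnn hmono hM h0 hm2 hm1 hlt
  simp only [he1, he2] at this
  linarith

include hnn hcont hmono h0 in
lemma phiOm_le {k a : ℕ} (hak : a ≤ k) {v r : ℝ} (hv : 0 ≤ v) (hr : 0 ≤ r)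
    (hle : v ≤ r ^ (k - a) * ω r) : phiOm ω k a v ≤ ω r := by
  unfold phiOm
  split_ifs with hik
  · have hM : 1 ≤ k - a := by omega
    have h1 : psiInv ω (k-a) v ≤ psiInv ω (k-a) (r ^ (k-a) * ω r) :=
      psiInv_mono hnn hcont hmono h0 hM hv (mul_nonneg (by positivity) (hnn r hr)) hle
    rw [psiInv_fM hnn hcont hmono h0 hM hr] at h1
    obtain ⟨hmem, -⟩ := psiInv_spec hnn hcont hmono h0 hM hv
    exact hmono.monotoneOn hmem (Set.mem_Ici.mpr hr) h1
  · have : a = k := by omega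
    rw [this] at hle
    simpa using hle

include hnn hcont hmono h0 in
lemma le_of_phiOm {k a : ℕ} (hak : a ≤ k) {v r d : ℝ} (hv : 0 ≤ v) (hr : 0 ≤ r)
    (hφ : phiOm ω k a v ≤ d) (hd : d ≤ ω r) : v ≤ r ^ (k - a) * d := by
  unfold phiOm at hφ
  split_ifs at hφ with hik
  · have hM : 1 ≤ k - a := by omega
    obtain ⟨hmem, heq⟩ := psiInv_spec hnn hcont hmono h0 hM hv
    set s := psiInv ω (k-a) v with hsdef
    have hs0 : 0 ≤ s := hmem
    have hsr : s ≤ r := le_of_omega_le hmono hs0 hr (le_trans hφ hd)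
    calc v = s ^ (k-a) * ω s := heq.symm
      _ ≤ r ^ (k-a) * d := by
          apply mul_le_mul (pow_le_pow_left₀ hs0 hsr _) hφ (hnn s hs0) (by positivity)
  · have : a = k := by omega
    rw [this]
    simpa using le_trans hφ (le_refl d)

end OmegaFacts

section DOmFacts
variable {ω : ℝ → ℝ} {n k : ℕ}
variable (hnn : ∀ t, 0 ≤ t → 0 ≤ ω t)
variable (hcont : ContinuousOn ω (Set.Ici 0))
variable (hmono : StrictMonoOn ω (Set.Ici 0))
variable (h0 : ω 0 = 0)

lemma omega_norm_le_dOm (T T' : MvPolynomial (Fin n) ℝ × EuclideanSpace ℝ (Fin n)) :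
    ω ‖T.2 - T'.2‖ ≤ dOm ω k T T' := by
  refine le_trans ?_ (Finset.le_sup' _ (multiIndices_nonempty n k).choose_spec)
  exact le_max_left _ _

include hnn in
lemma dOm_nonneg (T T' : MvPolynomial (Fin n) ℝ × EuclideanSpace ℝ (Fin n)) :
    0 ≤ dOm ω k T T' :=
  le_trans (hnn _ (norm_nonneg _)) (omega_norm_le_dOm T T')

lemma phi_eval_le_dOm_left {α : Fin n → ℕ} (hα : α ∈ multiIndices n k)
    (T T' : MvPolynomial (Fin n) ℝ × EuclideanSpace ℝ (Fin n)) :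
    phiOm ω k (∑ i, α i) |MvPolynomial.eval (fun i => T.2 i) (mderiv α (T.1 - T'.1))|
      ≤ dOm ω k T T' := by
  unfold dOm
  refine le_trans ?_ (Finset.le_sup' _ hα)
  exact le_trans (le_max_left _ _) (le_max_right _ _)

lemma phi_eval_le_dOm_right {α : Fin n → ℕ} (hα : α ∈ multiIndices n k)
    (T T' : MvPolynomial (Fin n) ℝ × EuclideanSpace ℝ (Fin n)) :
    phiOm ω k (∑ i, α i) |MvPolynomial.eval (fun i => T'.2 i) (mderiv α (T.1 - T'.1))|
      ≤ dOm ω k T T' := by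
  unfold dOm
  refine le_trans ?_ (Finset.le_sup' _ hα)
  exact le_trans (le_max_right _ _) (le_max_right _ _)

lemma dOm_le {T T' : MvPolynomial (Fin n) ℝ × EuclideanSpace ℝ (Fin n)} {B : ℝ}
    (h1 : ω ‖T.2 - T'.2‖ ≤ B)
    (h2 : ∀ α ∈ multiIndices n k,
      phiOm ω k (∑ i, α i) |MvPolynomial.eval (fun i => T.2 i) (mderiv α (T.1 - T'.1))| ≤ B)
    (h3 : ∀ α ∈ multiIndices n k,
      phiOm ω k (∑ i, α i) |MvPolynomial.eval (fun i => T'.2 i) (mderiv α (T.1 - T'.1))| ≤ B) :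
    dOm ω k T T' ≤ B := by
  apply Finset.sup'_le
  intro α hα
  exact max_le h1 (max_le (h2 α hα) (h3 α hα))

include hnn in
lemma delOm_bddBelow (T T' : MvPolynomial (Fin n) ℝ × EuclideanSpace ℝ (Fin n)) :
    BddBelow { r | ∃ (N : ℕ) (e : ℕ → MvPolynomial (Fin n) ℝ × EuclideanSpace ℝ (Fin n)),
      e 0 = T ∧ e N = T' ∧ (∀ i ≤ N, (e i).1.totalDegree ≤ k) ∧
      r = ∑ i ∈ Finset.range N, dOm ω k (e i) (e (i + 1)) } := by
  refine ⟨0, fun r hr => ?_⟩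
  obtain ⟨N, e, -, -, -, hsum⟩ := hr
  rw [hsum]
  exact Finset.sum_nonneg (fun i _ => dOm_nonneg hnn _ _)

include hnn in
lemma delOm_le_chain {T T' : MvPolynomial (Fin n) ℝ × EuclideanSpace ℝ (Fin n)}
    (N : ℕ) (e : ℕ → MvPolynomial (Fin n) ℝ × EuclideanSpace ℝ (Fin n))
    (he0 : e 0 = T) (heN : e N = T') (hdeg : ∀ i ≤ N, (e i).1.totalDegree ≤ k) :
    delOm ω k T T' ≤ ∑ i ∈ Finset.range N, dOm ω k (e i) (e (i + 1)) :=
  csInf_le (delOm_bddBelow hnn T T') ⟨N, e, he0, heN, hdeg, rfl⟩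

include hnn in
lemma delOm_exists_chain {T T' : MvPolynomial (Fin n) ℝ × EuclideanSpace ℝ (Fin n)}
    (hT : T.1.totalDegree ≤ k) (hT' : T'.1.totalDegree ≤ k) {r : ℝ}
    (h : delOm ω k T T' < r) :
    ∃ (N : ℕ) (e : ℕ → MvPolynomial (Fin n) ℝ × EuclideanSpace ℝ (Fin n)),
      e 0 = T ∧ e N = T' ∧ (∀ i ≤ N, (e i).1.totalDegree ≤ k) ∧
      ∑ i ∈ Finset.range N, dOm ω k (e i) (e (i + 1)) < r := by
  classical
  have hne : Set.Nonempty { r | ∃ (N : ℕ)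
      (e : ℕ → MvPolynomial (Fin n) ℝ × EuclideanSpace ℝ (Fin n)),
      e 0 = T ∧ e N = T' ∧ (∀ i ≤ N, (e i).1.totalDegree ≤ k) ∧
      r = ∑ i ∈ Finset.range N, dOm ω k (e i) (e (i + 1)) } := by
    refine ⟨dOm ω k T T', 1, fun j => if j = 0 then T else T', by simp, by simp, ?_, by simp⟩
    intro i hi
    by_cases hi0 : i = 0 <;> simp [hi0, hT, hT']
  obtain ⟨x, hx, hxr⟩ := (csInf_lt_iff (delOm_bddBelow hnn T T') hne).mp h
  obtain ⟨N, e, h1, h2, h3, h4⟩ := hx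
  exact ⟨N, e, h1, h2, h3, h4 ▸ hxr⟩

lemma norm_chain_le (z : ℕ → EuclideanSpace ℝ (Fin n)) (p q : ℕ) (hpq : p ≤ q) :
    ‖z p - z q‖ ≤ ∑ j ∈ Finset.Ico p q, ‖z j - z (j + 1)‖ := by
  induction q, hpq using Nat.le_induction with
  | base => simp
  | succ q hpq ih =>
      rw [Finset.sum_Ico_succ_top hpq]
      calc ‖z p - z (q+1)‖ ≤ ‖z p - z q‖ + ‖z q - z (q+1)‖ := by
            have : z p - z (q+1) = (z p - z q) + (z q - z (q+1)) := by abel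
            rw [this]; exact norm_add_le _ _
        _ ≤ _ := by linarith

end DOmFacts

lemma mem_multiIndices {n k : ℕ} {γ : Fin n → ℕ} (h : ∑ i, γ i ≤ k) :
    γ ∈ multiIndices n k := by
  simp only [multiIndices, Finset.mem_filter, Fintype.mem_piFinset, Finset.mem_range]
  refine ⟨fun i => ?_, h⟩
  have : γ i ≤ ∑ j, γ j := Finset.single_le_sum (f := fun j => γ j)
    (fun j _ => Nat.zero_le _) (Finset.mem_univ i)
  omega

lemma coord_abs_le_norm {n : ℕ} (w : EuclideanSpace ℝ (Fin n)) (i : Fin n) : |w i| ≤ ‖w‖ := by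
  rw [EuclideanSpace.norm_eq w,
    show |w i| = Real.sqrt (|w i|^2) by rw [Real.sqrt_sq_eq_abs, abs_abs]]
  apply Real.sqrt_le_sqrt
  rw [sq_abs]
  calc (w i)^2 = ‖w i‖^2 := by rw [Real.norm_eq_abs, sq_abs]
    _ ≤ ∑ j, ‖w j‖^2 :=
      Finset.single_le_sum (f := fun j => ‖w j‖^2) (fun j _ => by positivity)
        (Finset.mem_univ i)

end Aux

set_option maxHeartbeats 4000000 in
/-- Lemma 2.6: under the chain hypotheses,
`δ_ω(τ⁻¹∘T₀, τ⁻¹∘T_m) ≤ ω(‖x₀ − x_m‖)` where `τ = e^{2n} λ^{k+1}`. -/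
theorem delOm_chain_triangle {n k : ℕ} (hk : 1 ≤ k)
    (ω : ℝ → ℝ)
    (hnn : ∀ t, 0 ≤ t → 0 ≤ ω t)
    (hcont : ContinuousOn ω (Set.Ici 0))
    (hmono : StrictMonoOn ω (Set.Ici 0))
    (hconc : ConcaveOn ℝ (Set.Ici 0) ω)
    (h0 : ω 0 = 0)
    (m : ℕ) (c : ℕ → MvPolynomial (Fin n) ℝ × EuclideanSpace ℝ (Fin n))
    (hdeg : ∀ i ≤ m, (c i).1.totalDegree ≤ k)
    (hstep : ∀ i < m, delOm ω k (c i) (c (i + 1)) ≤ ω ‖(c i).2 - (c (i + 1)).2‖)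
    (l : ℝ) (hl : 1 ≤ l)
    (hlen : ∑ i ∈ Finset.range m, ‖(c i).2 - (c (i + 1)).2‖ ≤ l * ‖(c 0).2 - (c m).2‖)
    (hωlen : ∑ i ∈ Finset.range m, ω ‖(c i).2 - (c (i + 1)).2‖ ≤ l * ω ‖(c 0).2 - (c m).2‖)
    :
    delOm ω k (scaleJet (Real.exp (2 * n) * l ^ (k + 1))⁻¹ (c 0))
        (scaleJet (Real.exp (2 * n) * l ^ (k + 1))⁻¹ (c m)) ≤
      ω ‖(c 0).2 - (c m).2‖ := by
  classical
  set τ := Real.exp (2 * n) * l ^ (k + 1) with hτ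
  have hl0 : (0:ℝ) < l := lt_of_lt_of_le one_pos hl
  have hτpos : 0 < τ := by positivity
  set D := ‖(c 0).2 - (c m).2‖ with hD
  have hD0 : (0:ℝ) ≤ D := norm_nonneg _
  have hωD : 0 ≤ ω D := hnn D hD0
  set A := scaleJet τ⁻¹ (c 0) with hA
  set B := scaleJet τ⁻¹ (c m) with hB
  have hdegA : A.1.totalDegree ≤ k :=
    le_trans (MvPolynomial.totalDegree_smul_le _ _) (hdeg 0 (Nat.zero_le m))
  have hdegB : B.1.totalDegree ≤ k :=
    le_trans (MvPolynomial.totalDegree_smul_le _ _) (hdeg m le_rfl)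
  -- Step 1: one-step chain
  have step1 : delOm ω k A B ≤ dOm ω k A B := by
    have h := Aux.delOm_le_chain (ω := ω) (k := k) (T := A) (T' := B) hnn 1
      (fun j => if j = 0 then A else B) (by simp) (by simp) ?_
    · simpa using h
    · intro i hi
      by_cases hi0 : i = 0 <;> simp [hi0, hdegA, hdegB]
  refine le_trans step1 ?_
  -- Step 2: key estimate on derivatives of P₀ - P_m
  have key : ∀ α ∈ multiIndices n k, ∀ x : EuclideanSpace ℝ (Fin n),
      (x = (c 0).2 ∨ x = (c m).2) →
      |MvPolynomial.eval (fun i => x i) (mderiv α ((c 0).1 - (c m).1))|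
        ≤ Real.exp n * l ^ (k + 1) * (D ^ (k - ∑ i, α i) * ω D) := by
    intro α hα x hx
    have ha : (∑ i, α i) ≤ k := (Finset.mem_filter.mp hα).2
    set a := ∑ i, α i with ha_def
    set t : ℕ → ℝ := fun i => ‖(c i).2 - (c (i+1)).2‖ with ht_def
    have ht0 : ∀ i, 0 ≤ t i := fun i => norm_nonneg _
    have htlD : ∀ i < m, t i ≤ l * D := by
      intro i hi
      calc t i ≤ ∑ i' ∈ Finset.range m, t i' :=
            Finset.single_le_sum (fun j _ => ht0 j) (Finset.mem_range.mpr hi)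
        _ ≤ l * D := hlen
    set v := |MvPolynomial.eval (fun i => x i) (mderiv α ((c 0).1 - (c m).1))| with hv
    have hv0 : 0 ≤ v := abs_nonneg _
    have keyδ : ∀ δ : ℝ, 0 < δ →
        v ≤ Real.exp n * (l * D + m * δ) ^ (k - a) * (l * ω D + m * ω δ) := by
      intro δ hδ
      have hωδ : 0 ≤ ω δ := hnn δ hδ.le
      have hchain : ∀ i : ℕ, ∃ (N : ℕ)
          (e : ℕ → MvPolynomial (Fin n) ℝ × EuclideanSpace ℝ (Fin n)),
          (i < m → (e 0 = c i ∧ e N = c (i+1) ∧ (∀ j ≤ N, (e j).1.totalDegree ≤ k) ∧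
            ∑ j ∈ Finset.range N, dOm ω k (e j) (e (j+1)) < ω (t i + δ))) := by
        intro i
        by_cases hi : i < m
        · have hlt : delOm ω k (c i) (c (i+1)) < ω (t i + δ) := by
            calc delOm ω k (c i) (c (i+1)) ≤ ω (t i) := hstep i hi
              _ < ω (t i + δ) := hmono (Set.mem_Ici.mpr (ht0 i))
                  (Set.mem_Ici.mpr (by linarith [ht0 i])) (by linarith)
          obtain ⟨N, e, h1, h2, h3, h4⟩ :=
            Aux.delOm_exists_chain hnn (hdeg i hi.le) (hdeg (i+1) hi) hlt
          exact ⟨N, e, fun _ => ⟨h1, h2, h3, h4⟩⟩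
        · exact ⟨0, fun _ => c i, fun h => absurd h hi⟩
      choose N e hprop using hchain
      set d : ℕ → ℕ → ℝ := fun i j => dOm ω k (e i j) (e i (j+1)) with hd_def
      have hd0 : ∀ i j, 0 ≤ d i j := fun i j => Aux.dOm_nonneg hnn _ _
      set cost : ℕ → ℝ := fun i => ∑ j ∈ Finset.range (N i), d i j with hcost_def
      have hcost0 : ∀ i, 0 ≤ cost i := fun i => Finset.sum_nonneg (fun j _ => hd0 i j)
      have hcostlt : ∀ i < m, cost i < ω (t i + δ) := fun i hi => ((hprop i) hi).2.2.2
      have hstep_le : ∀ i < m, ∀ j < N i, d i j ≤ ω (t i + δ) := by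
        intro i hi j hj
        calc d i j ≤ cost i := Finset.single_le_sum (fun j' _ => hd0 i j')
              (Finset.mem_range.mpr hj)
          _ ≤ ω (t i + δ) := (hcostlt i hi).le
      have hL : ∀ i < m, ∑ j ∈ Finset.range (N i), ‖(e i j).2 - (e i (j+1)).2‖ ≤ t i + δ := by
        intro i hi
        have h1 : ω (∑ j ∈ Finset.range (N i), ‖(e i j).2 - (e i (j+1)).2‖)
            ≤ ∑ j ∈ Finset.range (N i), ω ‖(e i j).2 - (e i (j+1)).2‖ :=
          Aux.omega_sum_le hconc h0 (fun j _ => norm_nonneg _)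
        have h2 : ∑ j ∈ Finset.range (N i), ω ‖(e i j).2 - (e i (j+1)).2‖ ≤ cost i :=
          Finset.sum_le_sum (fun j _ => Aux.omega_norm_le_dOm _ _)
        have h3 : ω (∑ j ∈ Finset.range (N i), ‖(e i j).2 - (e i (j+1)).2‖) < ω (t i + δ) :=
          lt_of_le_of_lt (le_trans h1 h2) (hcostlt i hi)
        exact (Aux.lt_of_omega_lt hmono (Finset.sum_nonneg (fun j _ => norm_nonneg _))
          (by linarith [ht0 i]) h3).le
      set S := l * D + ↑m * δ with hS
      have hS0 : (0:ℝ) ≤ S := by positivity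
      have htS : ∀ i < m, t i + δ ≤ S := by
        intro i hi
        have h1 := htlD i hi
        have hm1 : (1:ℝ) ≤ (m:ℝ) := by
          have : 1 ≤ m := by omega
          exact_mod_cast this
        have h2 : δ ≤ ↑m * δ := by nlinarith
        simp only [hS]; linarith
      have hwander : ∀ i < m, ∀ j ≤ N i, ‖x - (e i j).2‖ ≤ S := by
        intro i hi j hj
        obtain ⟨he0, heN, hedeg, -⟩ := hprop i hi
        have hsub0 : ‖(e i 0).2 - (e i j).2‖ ≤ t i + δ := by
          calc ‖(e i 0).2 - (e i j).2‖
              ≤ ∑ j' ∈ Finset.Ico 0 j, ‖(e i j').2 - (e i (j'+1)).2‖ :=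
                Aux.norm_chain_le (fun j' => (e i j').2) 0 j (Nat.zero_le j)
            _ ≤ ∑ j' ∈ Finset.range (N i), ‖(e i j').2 - (e i (j'+1)).2‖ := by
                apply Finset.sum_le_sum_of_subset_of_nonneg
                · intro j' hj'
                  simp only [Finset.mem_Ico, Finset.mem_range] at hj' ⊢
                  omega
                · intro j' _ _; exact norm_nonneg _
            _ ≤ t i + δ := hL i hi
        have hsubN : ‖(e i j).2 - (e i (N i)).2‖ ≤ t i + δ := by
          calc ‖(e i j).2 - (e i (N i)).2‖
              ≤ ∑ j' ∈ Finset.Ico j (N i), ‖(e i j').2 - (e i (j'+1)).2‖ :=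
                Aux.norm_chain_le (fun j' => (e i j').2) j (N i) hj
            _ ≤ ∑ j' ∈ Finset.range (N i), ‖(e i j').2 - (e i (j'+1)).2‖ := by
                apply Finset.sum_le_sum_of_subset_of_nonneg
                · intro j' hj'
                  simp only [Finset.mem_Ico, Finset.mem_range] at hj' ⊢
                  omega
                · intro j' _ _; exact norm_nonneg _
            _ ≤ t i + δ := hL i hi
        have hδm : δ ≤ ↑m * δ := by
          have hm1 : (1:ℝ) ≤ (m:ℝ) := by
            have : 1 ≤ m := by omega
            exact_mod_cast this
          nlinarith
        rcases hx with hx0 | hxm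
        · have hc0 : ‖(c 0).2 - (c i).2‖ ≤ ∑ i' ∈ Finset.range i, t i' := by
            have h := Aux.norm_chain_le (fun i' => (c i').2) 0 i (Nat.zero_le i)
            rw [Finset.range_eq_Ico]
            exact h
          have hsum : (∑ i' ∈ Finset.range i, t i') + t i ≤ l * D := by
            rw [← Finset.sum_range_succ]
            calc ∑ i' ∈ Finset.range (i+1), t i'
                ≤ ∑ i' ∈ Finset.range m, t i' := by
                  apply Finset.sum_le_sum_of_subset_of_nonneg
                  · exact Finset.range_subset_range.mpr (by omega)
                  · intro i' _ _; exact ht0 i'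
              _ ≤ l * D := hlen
          calc ‖x - (e i j).2‖
              ≤ ‖(c 0).2 - (c i).2‖ + ‖(c i).2 - (e i j).2‖ := by
                rw [hx0]
                have : (c 0).2 - (e i j).2 = ((c 0).2 - (c i).2) + ((c i).2 - (e i j).2) := by
                  abel
                rw [this]; exact norm_add_le _ _
            _ ≤ (∑ i' ∈ Finset.range i, t i') + (t i + δ) := by
                have h5 : (c i).2 = (e i 0).2 := by rw [he0]
                rw [h5] at hc0 ⊢
                linarith [hsub0, hc0]
            _ ≤ S := by simp only [hS]; linarith
        · have hc1 : ‖(c (i+1)).2 - (c m).2‖ ≤ ∑ i' ∈ Finset.Ico (i+1) m, t i' := by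
            exact Aux.norm_chain_le (fun i' => (c i').2) (i+1) m (by omega)
          have hsum : t i + (∑ i' ∈ Finset.Ico (i+1) m, t i') ≤ l * D := by
            have h1 : t i + (∑ i' ∈ Finset.Ico (i+1) m, t i')
                = ∑ i' ∈ Finset.Ico i m, t i' :=
              (Finset.sum_eq_sum_Ico_succ_bot hi _).symm
            rw [h1]
            calc ∑ i' ∈ Finset.Ico i m, t i'
                ≤ ∑ i' ∈ Finset.range m, t i' := by
                  apply Finset.sum_le_sum_of_subset_of_nonneg
                  · intro i' hi'
                    simp only [Finset.mem_Ico, Finset.mem_range] at hi' ⊢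
                    omega
                  · intro i' _ _; exact ht0 i'
              _ ≤ l * D := hlen
          calc ‖x - (e i j).2‖
              ≤ ‖(e i j).2 - (e i (N i)).2‖ + ‖(c (i+1)).2 - (c m).2‖ := by
                rw [hxm, norm_sub_rev]
                have : (e i j).2 - (c m).2
                    = ((e i j).2 - (e i (N i)).2) + ((c (i+1)).2 - (c m).2) := by
                  rw [heN]; abel
                rw [this]; exact norm_add_le _ _
            _ ≤ (t i + δ) + (∑ i' ∈ Finset.Ico (i+1) m, t i') := by
                linarith [hsubN, hc1]
            _ ≤ S := by simp only [hS]; linarith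
      have hij : ∀ i < m, ∀ j < N i,
          |MvPolynomial.eval (fun i' => x i') (mderiv α ((e i j).1 - (e i (j+1)).1))|
            ≤ Real.exp n * S ^ (k - a) * d i j := by
        intro i hi j hj
        obtain ⟨he0, heN, hedeg, -⟩ := hprop i hi
        have hdegR : ((e i j).1 - (e i (j+1)).1).totalDegree ≤ k :=
          le_trans (MvPolynomial.totalDegree_sub _ _)
            (max_le (hedeg j hj.le) (hedeg (j+1) hj))
        have htδ0 : (0:ℝ) ≤ t i + δ := by linarith [ht0 i]
        have hder : ∀ γ : Fin n → ℕ, (∑ i', γ i') ≤ k →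
            |MvPolynomial.eval (fun i' => (e i j).2 i')
                (mderiv γ ((e i j).1 - (e i (j+1)).1))|
              ≤ (t i + δ) ^ (k - ∑ i', γ i') * d i j := by
          intro γ hγ
          have hγmem : γ ∈ multiIndices n k := Aux.mem_multiIndices hγ
          have hphi := Aux.phi_eval_le_dOm_left (ω := ω) hγmem (e i j) (e i (j+1))
          exact Aux.le_of_phiOm hnn hcont hmono h0 hγ (abs_nonneg _) htδ0 hphi
            (hstep_le i hi j hj)
        have hQdeg : (mderiv α ((e i j).1 - (e i (j+1)).1)).totalDegree ≤ k - a := by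
          refine le_trans (Aux.totalDegree_mderiv_le α _) ?_
          have := hdegR
          omega
        have htay := Aux.taylor (k - a) _ hQdeg (fun i' => (e i j).2 i') (fun i' => x i')
        have hcoord : ∀ i' : Fin n, |x i' - (e i j).2 i'| ≤ S := by
          intro i'
          have h1 : x i' - (e i j).2 i' = (x - (e i j).2) i' := rfl
          rw [h1]
          exact le_trans (Aux.coord_abs_le_norm _ i') (hwander i hi j hj.le)
        have hsum_fact : ∑ β ∈ Fintype.piFinset (fun _ : Fin n => Finset.range (k - a + 1)),
            ∏ i' : Fin n, (1 / ((β i').factorial : ℝ)) ≤ Real.exp 1 ^ n := by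
          have hps := Finset.prod_univ_sum (fun _ : Fin n => Finset.range (k - a + 1))
            (fun i' b => (1:ℝ) / (b.factorial : ℝ))
          rw [← hps]
          calc ∏ i' : Fin n, ∑ b ∈ Finset.range (k - a + 1), (1 / (b.factorial : ℝ))
              ≤ ∏ i' : Fin n, Real.exp 1 := by
                apply Finset.prod_le_prod
                · intro i' _
                  apply Finset.sum_nonneg
                  intro b _
                  positivity
                · intro i' _
                  have h := Real.sum_le_exp_of_nonneg (zero_le_one) (k - a + 1)
                  simpa using h
            _ = Real.exp 1 ^ n := by
                rw [Finset.prod_const, Finset.card_univ, Fintype.card_fin]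
        calc |MvPolynomial.eval (fun i' => x i') (mderiv α ((e i j).1 - (e i (j+1)).1))|
            = |∑ β ∈ Fintype.piFinset (fun _ : Fin n => Finset.range (k - a + 1)),
                MvPolynomial.eval (fun i' => (e i j).2 i')
                    (mderiv β (mderiv α ((e i j).1 - (e i (j+1)).1)))
                  * ∏ i' : Fin n, ((x i' - (e i j).2 i') ^ (β i')
                      / ((β i').factorial : ℝ))| := by rw [← htay]
          _ ≤ ∑ β ∈ Fintype.piFinset (fun _ : Fin n => Finset.range (k - a + 1)),
                |MvPolynomial.eval (fun i' => (e i j).2 i')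
                    (mderiv (fun i' => α i' + β i') ((e i j).1 - (e i (j+1)).1))|
                  * ∏ i' : Fin n, (|x i' - (e i j).2 i'| ^ (β i')
                      / ((β i').factorial : ℝ)) := by
              refine le_trans (Finset.abs_sum_le_sum_abs _ _) (Finset.sum_le_sum ?_)
              intro β _
              rw [abs_mul, Aux.mderiv_mderiv]
              apply mul_le_mul_of_nonneg_left ?_ (abs_nonneg _)
              rw [Finset.abs_prod]
              apply le_of_eq
              apply Finset.prod_congr rfl
              intro i' _
              rw [abs_div, abs_pow, Nat.abs_cast]
          _ ≤ ∑ β ∈ Fintype.piFinset (fun _ : Fin n => Finset.range (k - a + 1)),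
                (S ^ (k - a) * d i j) * ∏ i' : Fin n, (1 / ((β i').factorial : ℝ)) := by
              apply Finset.sum_le_sum
              intro β _
              by_cases hcase : a + ∑ i', β i' ≤ k
              · have hγsum : (∑ i', (fun i' => α i' + β i') i') = a + ∑ i', β i' := by
                  rw [Finset.sum_add_distrib]
                have h1 := hder (fun i' => α i' + β i') (by rw [hγsum]; exact hcase)
                rw [hγsum] at h1
                have h2 : ∏ i' : Fin n, (|x i' - (e i j).2 i'| ^ (β i')
                      / ((β i').factorial : ℝ))
                    ≤ S ^ (∑ i', β i') * ∏ i' : Fin n, (1 / ((β i').factorial : ℝ)) := by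
                  rw [← Finset.prod_pow_eq_pow_sum, ← Finset.prod_mul_distrib]
                  apply Finset.prod_le_prod
                  · intro i' _
                    positivity
                  · intro i' _
                    rw [div_eq_mul_one_div]
                    apply mul_le_mul_of_nonneg_right
                      (pow_le_pow_left₀ (abs_nonneg _) (hcoord i') _)
                    positivity
                calc |MvPolynomial.eval (fun i' => (e i j).2 i')
                        (mderiv (fun i' => α i' + β i') ((e i j).1 - (e i (j+1)).1))|
                      * ∏ i' : Fin n, (|x i' - (e i j).2 i'| ^ (β i')
                          / ((β i').factorial : ℝ))
                    ≤ ((t i + δ) ^ (k - (a + ∑ i', β i')) * d i j)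
                      * (S ^ (∑ i', β i') * ∏ i' : Fin n, (1 / ((β i').factorial : ℝ))) := by
                      exact mul_le_mul h1 h2 (Finset.prod_nonneg (fun i' _ => by positivity))
                        (mul_nonneg (pow_nonneg htδ0 _) (hd0 i j))
                  _ ≤ (S ^ (k - (a + ∑ i', β i')) * d i j)
                      * (S ^ (∑ i', β i') * ∏ i' : Fin n, (1 / ((β i').factorial : ℝ))) := by
                      apply mul_le_mul_of_nonneg_right ?_
                        (by positivity)
                      apply mul_le_mul_of_nonneg_right
                        (pow_le_pow_left₀ htδ0 (htS i hi) _) (hd0 i j)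
                  _ = (S ^ (k - a) * d i j) * ∏ i' : Fin n, (1 / ((β i').factorial : ℝ)) := by
                      have hpow : S ^ (k - (a + ∑ i', β i')) * S ^ (∑ i', β i')
                          = S ^ (k - a) := by
                        rw [← pow_add]
                        congr 1
                        omega
                      calc (S ^ (k - (a + ∑ i', β i')) * d i j)
                            * (S ^ (∑ i', β i') * ∏ i' : Fin n, (1 / ((β i').factorial : ℝ)))
                          = (S ^ (k - (a + ∑ i', β i')) * S ^ (∑ i', β i')) * d i j
                            * ∏ i' : Fin n, (1 / ((β i').factorial : ℝ)) := by ring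
                        _ = _ := by rw [hpow]
              · have hzero : mderiv (fun i' => α i' + β i') ((e i j).1 - (e i (j+1)).1) = 0 := by
                  apply Aux.mderiv_eq_zero_of_totalDegree_lt
                  rw [Finset.sum_add_distrib]
                  omega
                rw [hzero, map_zero, abs_zero, zero_mul]
                exact mul_nonneg (mul_nonneg (pow_nonneg hS0 _) (hd0 i j))
                  (Finset.prod_nonneg (fun i' _ => by positivity))
          _ = (S ^ (k - a) * d i j) * ∑ β ∈ Fintype.piFinset
                (fun _ : Fin n => Finset.range (k - a + 1)),
                ∏ i' : Fin n, (1 / ((β i').factorial : ℝ)) := by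
              rw [Finset.mul_sum]
          _ ≤ (S ^ (k - a) * d i j) * Real.exp 1 ^ n := by
              apply mul_le_mul_of_nonneg_left hsum_fact
              exact mul_nonneg (by positivity) (hd0 i j)
          _ = Real.exp n * S ^ (k - a) * d i j := by
              rw [Real.exp_one_pow]
              ring
      have htel : v ≤ ∑ i ∈ Finset.range m, ∑ j ∈ Finset.range (N i),
          |MvPolynomial.eval (fun i' => x i') (mderiv α ((e i j).1 - (e i (j+1)).1))| := by
        have inner : ∀ i < m, ∑ j ∈ Finset.range (N i),
            MvPolynomial.eval (fun i' => x i') (mderiv α ((e i j).1 - (e i (j+1)).1))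
            = MvPolynomial.eval (fun i' => x i') (mderiv α (c i).1)
              - MvPolynomial.eval (fun i' => x i') (mderiv α (c (i+1)).1) := by
          intro i hi
          obtain ⟨he0, heN, -, -⟩ := hprop i hi
          calc ∑ j ∈ Finset.range (N i),
              MvPolynomial.eval (fun i' => x i') (mderiv α ((e i j).1 - (e i (j+1)).1))
              = ∑ j ∈ Finset.range (N i),
                (MvPolynomial.eval (fun i' => x i') (mderiv α (e i j).1)
                  - MvPolynomial.eval (fun i' => x i') (mderiv α (e i (j+1)).1)) := by
                apply Finset.sum_congr rfl
                intro j _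
                rw [Aux.mderiv_sub, map_sub]
            _ = MvPolynomial.eval (fun i' => x i') (mderiv α (e i 0).1)
                - MvPolynomial.eval (fun i' => x i') (mderiv α (e i (N i)).1) :=
                Finset.sum_range_sub'
                  (fun j => MvPolynomial.eval (fun i' => x i') (mderiv α (e i j).1)) (N i)
            _ = _ := by rw [he0, heN]
        have houter : MvPolynomial.eval (fun i' => x i') (mderiv α ((c 0).1 - (c m).1))
            = ∑ i ∈ Finset.range m, ∑ j ∈ Finset.range (N i),
                MvPolynomial.eval (fun i' => x i') (mderiv α ((e i j).1 - (e i (j+1)).1)) := by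
          calc MvPolynomial.eval (fun i' => x i') (mderiv α ((c 0).1 - (c m).1))
              = MvPolynomial.eval (fun i' => x i') (mderiv α (c 0).1)
                - MvPolynomial.eval (fun i' => x i') (mderiv α (c m).1) := by
                rw [Aux.mderiv_sub, map_sub]
            _ = ∑ i ∈ Finset.range m,
                (MvPolynomial.eval (fun i' => x i') (mderiv α (c i).1)
                  - MvPolynomial.eval (fun i' => x i') (mderiv α (c (i+1)).1)) :=
                (Finset.sum_range_sub'
                  (fun i => MvPolynomial.eval (fun i' => x i') (mderiv α (c i).1)) m).symm
            _ = _ := by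
                apply Finset.sum_congr rfl
                intro i hi
                exact (inner i (Finset.mem_range.mp hi)).symm
        rw [hv, houter]
        exact le_trans (Finset.abs_sum_le_sum_abs _ _)
          (Finset.sum_le_sum (fun i _ => Finset.abs_sum_le_sum_abs _ _))
      calc v ≤ ∑ i ∈ Finset.range m, ∑ j ∈ Finset.range (N i),
            |MvPolynomial.eval (fun i' => x i') (mderiv α ((e i j).1 - (e i (j+1)).1))| := htel
        _ ≤ ∑ i ∈ Finset.range m, ∑ j ∈ Finset.range (N i), Real.exp n * S ^ (k-a) * d i j := by
            apply Finset.sum_le_sum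
            intro i hi
            apply Finset.sum_le_sum
            intro j hj
            exact hij i (Finset.mem_range.mp hi) j (Finset.mem_range.mp hj)
        _ = Real.exp n * S ^ (k-a) * ∑ i ∈ Finset.range m, cost i := by
            rw [Finset.mul_sum]
            apply Finset.sum_congr rfl
            intro i _
            rw [hcost_def, Finset.mul_sum]
        _ ≤ Real.exp n * S ^ (k-a) * (l * ω D + ↑m * ω δ) := by
            apply mul_le_mul_of_nonneg_left ?_ (by positivity)
            calc ∑ i ∈ Finset.range m, cost i
                ≤ ∑ i ∈ Finset.range m, ω (t i + δ) :=
                  Finset.sum_le_sum (fun i hi => (hcostlt i (Finset.mem_range.mp hi)).le)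
              _ ≤ ∑ i ∈ Finset.range m, (ω (t i) + ω δ) :=
                  Finset.sum_le_sum (fun i _ =>
                    Aux.omega_subadd hconc h0 (ht0 i) hδ.le)
              _ = (∑ i ∈ Finset.range m, ω (t i)) + ↑m * ω δ := by
                  rw [Finset.sum_add_distrib, Finset.sum_const, Finset.card_range,
                    nsmul_eq_mul]
              _ ≤ l * ω D + ↑m * ω δ := by
                  have := hωlen
                  simp only [ht_def]
                  linarith [hωlen]
    -- pass to the limit δ → 0⁺
    have hlim : v ≤ Real.exp n * (l * D) ^ (k - a) * (l * ω D) := by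
      have htendδ : Filter.Tendsto (fun δ : ℝ => δ) (nhdsWithin 0 (Set.Ioi 0)) (nhds 0) :=
        Filter.Tendsto.mono_left Filter.tendsto_id nhdsWithin_le_nhds
      have htendω : Filter.Tendsto ω (nhdsWithin 0 (Set.Ioi 0)) (nhds 0) := by
        have h1 : ContinuousWithinAt ω (Set.Ici 0) 0 := hcont 0 Set.self_mem_Ici
        have h2 := h1.tendsto
        rw [h0] at h2
        exact h2.mono_left (nhdsWithin_mono 0 Set.Ioi_subset_Ici_self)
      have hg : Filter.Tendsto
          (fun δ : ℝ => Real.exp ↑n * (l * D + ↑m * δ) ^ (k - a) * (l * ω D + ↑m * ω δ))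
          (nhdsWithin 0 (Set.Ioi 0))
          (nhds (Real.exp ↑n * (l * D + ↑m * 0) ^ (k - a) * (l * ω D + ↑m * 0))) := by
        exact ((tendsto_const_nhds.mul
          ((tendsto_const_nhds.add (tendsto_const_nhds.mul htendδ)).pow (k - a))).mul
          (tendsto_const_nhds.add (tendsto_const_nhds.mul htendω)))
      have hev : ∀ᶠ δ in nhdsWithin 0 (Set.Ioi 0),
          v ≤ Real.exp ↑n * (l * D + ↑m * δ) ^ (k - a) * (l * ω D + ↑m * ω δ) :=
        Filter.eventually_of_mem self_mem_nhdsWithin (fun δ hδ => keyδ δ hδ)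
      have := ge_of_tendsto hg hev
      simpa using this
    calc v ≤ Real.exp n * (l * D) ^ (k - a) * (l * ω D) := hlim
      _ = Real.exp n * (l ^ (k-a) * l) * (D ^ (k - a) * ω D) := by
          rw [mul_pow]; ring
      _ ≤ Real.exp n * l ^ (k+1) * (D ^ (k - a) * ω D) := by
          apply mul_le_mul_of_nonneg_right ?_ (by positivity)
          apply mul_le_mul_of_nonneg_left ?_ (Real.exp_nonneg _)
          rw [← pow_succ]
          exact pow_le_pow_right₀ hl (by omega)
  -- Step 3: assemble the dOm bound
  have hAB1 : A.1 - B.1 = τ⁻¹ • ((c 0).1 - (c m).1) := by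
    simp [hA, hB, scaleJet, smul_sub]
  have hA2 : A.2 = (c 0).2 := rfl
  have hB2 : B.2 = (c m).2 := rfl
  have heval : ∀ (α : Fin n → ℕ) (x : EuclideanSpace ℝ (Fin n)),
      |MvPolynomial.eval (fun i => x i) (mderiv α (A.1 - B.1))|
        = τ⁻¹ * |MvPolynomial.eval (fun i => x i) (mderiv α ((c 0).1 - (c m).1))| := by
    intro α x
    rw [hAB1, Aux.mderiv_smul, MvPolynomial.smul_eq_C_mul, map_mul, MvPolynomial.eval_C,
      abs_mul, abs_of_pos (by positivity : (0:ℝ) < τ⁻¹)]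
  have hexp : τ⁻¹ * Real.exp n * l ^ (k + 1) ≤ 1 := by
    have heq : τ⁻¹ * Real.exp ↑n * l ^ (k + 1) = Real.exp ↑n / Real.exp (2 * ↑n) := by
      rw [hτ]
      have h1 : (l ^ (k+1) : ℝ) ≠ 0 := by positivity
      have h2 : Real.exp (2 * ↑n) ≠ 0 := (Real.exp_pos _).ne'
      field_simp
    rw [heq, div_le_one (Real.exp_pos _)]
    apply Real.exp_le_exp.mpr
    have : (0:ℝ) ≤ n := Nat.cast_nonneg n
    linarith
  have hfinal : ∀ α ∈ multiIndices n k, ∀ x : EuclideanSpace ℝ (Fin n),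
      (x = (c 0).2 ∨ x = (c m).2) →
      phiOm ω k (∑ i, α i)
        |MvPolynomial.eval (fun i => x i) (mderiv α (A.1 - B.1))| ≤ ω D := by
    intro α hα x hx
    have ha : (∑ i, α i) ≤ k := by
      simp only [multiIndices, Finset.mem_filter] at hα
      exact hα.2
    rw [heval α x]
    refine Aux.phiOm_le hnn hcont hmono h0 ha
      (by positivity) hD0 ?_
    calc τ⁻¹ * |MvPolynomial.eval (fun i => x i) (mderiv α ((c 0).1 - (c m).1))|
        ≤ τ⁻¹ * (Real.exp n * l ^ (k + 1) * (D ^ (k - ∑ i, α i) * ω D)) := by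
          apply mul_le_mul_of_nonneg_left (key α hα x hx) (by positivity)
      _ = (τ⁻¹ * Real.exp n * l ^ (k + 1)) * (D ^ (k - ∑ i, α i) * ω D) := by ring
      _ ≤ 1 * (D ^ (k - ∑ i, α i) * ω D) := by
          apply mul_le_mul_of_nonneg_right hexp (by positivity)
      _ = D ^ (k - ∑ i, α i) * ω D := one_mul _
  refine Aux.dOm_le (le_of_eq (by rw [hA2, hB2])) ?_ ?_
  · intro α hα
    exact hfinal α hα (c 0).2 (Or.inl rfl)
  · intro α hα
    exact hfinal α hα (c m).2 (Or.inr rfl)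
end

section
/- Under the hypotheses of Lemma 2.6 of the paper (chain T₀,…,T_m with δ_ω(T_i,T_{i+1}) ≤ ω(‖x_i−x_{i+1}‖), Σ‖x_i−x_{i+1}‖ ≤ λ‖x₀−x_m‖, Σω(‖x_i−x_{i+1}‖) ≤ λω(‖x₀−x_m‖), λ ≥ 1), for every multi-index α with |α| ≤ k one has |D^α(P₀ − P_m)(x₀)| ≤ e^{2n} λ^{k+1} ‖x₀ − x_m‖^{k−|α|} ω(‖x₀ − x_m‖). -/
open MvPolynomial

namespace ChainAux
variable {n : ℕ}


variable {n : ℕ}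

lemma iter_pderiv_add (i : Fin n) (m : ℕ) (p q : MvPolynomial (Fin n) ℝ) :
    (pderiv i)^[m] (p + q) = (pderiv i)^[m] p + (pderiv i)^[m] q := by
  induction m generalizing p q with
  | zero => rfl
  | succ m ih => rw [Function.iterate_succ_apply, Function.iterate_succ_apply,
      Function.iterate_succ_apply, map_add, ih]

lemma iter_pderiv_neg (i : Fin n) (m : ℕ) (p : MvPolynomial (Fin n) ℝ) :
    (pderiv i)^[m] (-p) = -((pderiv i)^[m] p) := by
  induction m generalizing p with
  | zero => rfl
  | succ m ih => rw [Function.iterate_succ_apply, Function.iterate_succ_apply, map_neg, ih]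

lemma mderiv_add (α : Fin n → ℕ) (p q : MvPolynomial (Fin n) ℝ) :
    mderiv α (p + q) = mderiv α p + mderiv α q := by
  unfold mderiv
  generalize (List.finRange n) = l
  induction l generalizing p q with
  | nil => rfl
  | cons i l ih => rw [List.foldl_cons, List.foldl_cons, List.foldl_cons, iter_pderiv_add, ih]

lemma mderiv_neg (α : Fin n → ℕ) (p : MvPolynomial (Fin n) ℝ) :
    mderiv α (-p) = -(mderiv α p) := by
  unfold mderiv
  generalize (List.finRange n) = l
  induction l generalizing p with
  | nil => rfl
  | cons i l ih => rw [List.foldl_cons, List.foldl_cons, iter_pderiv_neg, ih]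

lemma mderiv_sub (α : Fin n → ℕ) (p q : MvPolynomial (Fin n) ℝ) :
    mderiv α (p - q) = mderiv α p - mderiv α q := by
  rw [sub_eq_add_neg, mderiv_add, mderiv_neg, sub_eq_add_neg]

lemma mderiv_zero (α : Fin n → ℕ) : mderiv α (0 : MvPolynomial (Fin n) ℝ) = 0 := by
  have h := mderiv_add α 0 0
  simpa using h

lemma mderiv_sum {ι : Type*} (α : Fin n → ℕ) (s : Finset ι) (f : ι → MvPolynomial (Fin n) ℝ) :
    mderiv α (∑ x ∈ s, f x) = ∑ x ∈ s, mderiv α (f x) := by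
  classical
  induction s using Finset.induction_on with
  | empty => simpa using mderiv_zero α
  | insert _ _ h ih => rw [Finset.sum_insert h, Finset.sum_insert h, mderiv_add, ih]



lemma nat_desc_mul (a m : ℕ) : a * Nat.descFactorial (a - 1) m = Nat.descFactorial a (m + 1) := by
  cases a with
  | zero => simp
  | succ a => rw [Nat.succ_descFactorial_succ]; simp

lemma iter_pderiv_monomial (i : Fin n) (m : ℕ) (d : Fin n →₀ ℕ) (c : ℝ) :
    (pderiv i)^[m] (monomial d c) =
      monomial (d - Finsupp.single i m) (c * Nat.descFactorial (d i) m) := by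
  induction m generalizing d c with
  | zero => simp
  | succ m ih =>
      rw [Function.iterate_succ_apply, pderiv_monomial, ih]
      congr 1
      · rw [tsub_tsub, ← Finsupp.single_add, Nat.add_comm]
      · rw [Finsupp.tsub_apply, Finsupp.single_eq_same]
        push_cast [← nat_desc_mul (d i) m]
        ring

lemma nat_desc_add (a b c : ℕ) :
    Nat.descFactorial a (b + c) = Nat.descFactorial a b * Nat.descFactorial (a - b) c := by
  induction c with
  | zero => simp
  | succ c ih =>
      rw [← Nat.add_assoc, Nat.descFactorial_succ, ih, Nat.descFactorial_succ, tsub_tsub]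
      ring

lemma foldl_mderiv_monomial (α : Fin n → ℕ) :
    ∀ (l : List (Fin n)), l.Nodup → ∀ (d : Fin n →₀ ℕ) (c : ℝ),
      l.foldl (fun Q i => (pderiv i)^[α i] Q) (monomial d c) =
        monomial (d - (l.map fun i => Finsupp.single i (α i)).sum)
          (c * ((l.map fun i => Nat.descFactorial (d i) (α i)).prod : ℕ)) := by
  intro l
  induction l with
  | nil => intro _ d c; simp
  | cons i l ih =>
      intro hnd d c
      rw [List.nodup_cons] at hnd
      rw [List.foldl_cons, iter_pderiv_monomial, ih hnd.2]
      congr 1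
      · rw [List.map_cons, List.sum_cons, tsub_tsub]
      · rw [List.map_cons, List.prod_cons]
        have : ∀ j ∈ l, Nat.descFactorial ((d - Finsupp.single i (α i)) j) (α j)
            = Nat.descFactorial (d j) (α j) := by
          intro j hj
          rw [Finsupp.tsub_apply, Finsupp.single_eq_of_ne' (fun h => hnd.1 (by rw [h]; exact hj))]
          simp
        rw [List.map_congr_left this]
        push_cast
        ring

lemma mderiv_monomial (α : Fin n → ℕ) (d : Fin n →₀ ℕ) (c : ℝ) :
    mderiv α (monomial d c) =
      monomial (d - Finsupp.equivFunOnFinite.symm α)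
        (c * ∏ i, (Nat.descFactorial (d i) (α i) : ℝ)) := by
  rw [mderiv, foldl_mderiv_monomial α _ (List.nodup_finRange n)]
  have he : d - (((List.finRange n)).map fun i => Finsupp.single i (α i)).sum
      = d - Finsupp.equivFunOnFinite.symm α := by
    ext j
    rw [Finsupp.tsub_apply, Finsupp.tsub_apply]
    have h1 : (((List.finRange n).map fun i => Finsupp.single i (α i)).sum) j = α j := by
      rw [← Fin.sum_univ_def, Finsupp.finset_sum_apply]
      simp [Finsupp.single_apply]
    rw [h1]
    simp
  rw [he]
  congr 1
  rw [← Fin.prod_univ_def]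
  push_cast
  ring




lemma eval_mderiv_monomial (α : Fin n → ℕ) (d : Fin n →₀ ℕ) (c : ℝ) (y : Fin n → ℝ) :
    eval y (mderiv α (monomial d c)) =
      c * ∏ i, ((Nat.descFactorial (d i) (α i) : ℝ) * y i ^ (d i - α i)) := by
  rw [mderiv_monomial, eval_monomial, Finsupp.prod_fintype]
  · simp only [Finsupp.tsub_apply, Finsupp.coe_equivFunOnFinite_symm,
      Finset.prod_mul_distrib]
    ring
  · intro i
    exact pow_zero _

lemma mderiv_monomial_eq_zero (δ : Fin n → ℕ) (d : Fin n →₀ ℕ) (c : ℝ)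
    (h : (∑ i, d i) < ∑ i, δ i) : mderiv δ (monomial d c) = 0 := by
  obtain ⟨i, hi⟩ : ∃ i, d i < δ i := by
    by_contra hc
    push_neg at hc
    exact absurd (Finset.sum_le_sum fun i _ => hc i) (not_le.mpr h)
  rw [mderiv_monomial]
  have : (∏ j, (Nat.descFactorial (d j) (δ j) : ℝ)) = 0 := by
    apply Finset.prod_eq_zero (Finset.mem_univ i)
    rw [Nat.descFactorial_eq_zero_iff_lt.mpr hi]
    simp
  rw [this, mul_zero, map_zero]

lemma sum_finsupp_eq (d : Fin n →₀ ℕ) : d.sum (fun _ e => e) = ∑ i, d i :=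
  Finsupp.sum_fintype _ _ (fun _ => rfl)




lemma sum_choose_prod (k : ℕ) (e : Fin n → ℕ) (he : ∑ i, e i ≤ k) (x y : Fin n → ℝ) :
    ∑ β ∈ multiIndices n k,
        ∏ i, (((e i).choose (β i) : ℝ) * (x i - y i) ^ (β i) * y i ^ (e i - β i))
      = ∏ i, x i ^ e i := by
  rw [multiIndices, Finset.sum_filter_of_ne]
  · have hps := Finset.prod_univ_sum (fun _ : Fin n => Finset.range (k + 1))
      (fun i b => ((e i).choose b : ℝ) * (x i - y i) ^ b * y i ^ (e i - b))
    rw [← hps]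
    apply Finset.prod_congr rfl
    intro i _
    have hei : e i ≤ k :=
      le_trans (Finset.single_le_sum (fun j _ => Nat.zero_le (e j)) (Finset.mem_univ i)) he
    rw [← Finset.sum_subset (Finset.range_subset_range.mpr (by omega) :
        Finset.range (e i + 1) ⊆ Finset.range (k + 1))]
    · have := add_pow (x i - y i) (y i) (e i)
      simp only [sub_add_cancel] at this
      rw [this]
      apply Finset.sum_congr rfl
      intro b _
      ring
    · intro b _ hb
      rw [Finset.mem_range, not_lt] at hb
      rw [Nat.choose_eq_zero_of_lt (by omega)]
      simp
  · intro β hβ hne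
    by_contra hc
    apply hne
    rw [Fintype.mem_piFinset] at hβ
    obtain ⟨i, hi⟩ : ∃ i, e i < β i := by
      by_contra hc2
      push_neg at hc2
      exact hc (le_trans (Finset.sum_le_sum fun i _ => hc2 i) he)
    apply Finset.prod_eq_zero (Finset.mem_univ i)
    rw [Nat.choose_eq_zero_of_lt hi]
    simp

lemma taylor_mderiv (k : ℕ) (γ : Fin n → ℕ) (Q : MvPolynomial (Fin n) ℝ)
    (hQ : Q.totalDegree ≤ k) (x y : Fin n → ℝ) :
    eval x (mderiv γ Q) = ∑ β ∈ multiIndices n k,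
      (∏ i, ((β i).factorial : ℝ))⁻¹ * eval y (mderiv (fun i => β i + γ i) Q)
        * ∏ i, (x i - y i) ^ β i := by
  have hterm : ∀ (a b g : ℕ) (u v : ℝ),
      ((b.factorial : ℝ))⁻¹ * ((Nat.descFactorial a (b + g) : ℝ) * v ^ (a - (b + g))) * u ^ b
        = (Nat.descFactorial a g : ℝ) *
            (((a - g).choose b : ℝ) * u ^ b * v ^ ((a - g) - b)) := by
    intro a b g u v
    have h1 : b + g = g + b := Nat.add_comm _ _
    have h2 : a - (b + g) = a - g - b := by omega
    rw [h2, h1, nat_desc_add a g b, Nat.descFactorial_eq_factorial_mul_choose (a - g) b]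
    have hb : ((b.factorial : ℝ)) ≠ 0 := Nat.cast_ne_zero.mpr (Nat.factorial_ne_zero b)
    push_cast
    field_simp
  have key : ∀ d ∈ Q.support, eval x (mderiv γ (monomial d (coeff d Q)))
      = ∑ β ∈ multiIndices n k,
          (∏ i, ((β i).factorial : ℝ))⁻¹
            * eval y (mderiv (fun i => β i + γ i) (monomial d (coeff d Q)))
            * ∏ i, (x i - y i) ^ β i := by
    intro d hd
    have hdk : ∑ i, d i ≤ k := by
      rw [← sum_finsupp_eq]
      exact le_trans (le_totalDegree hd) hQ
    set c := coeff d Q with hc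
    have hL : eval x (mderiv γ (monomial d c))
        = (c * ∏ i, (Nat.descFactorial (d i) (γ i) : ℝ)) * ∏ i, x i ^ (d i - γ i) := by
      rw [eval_mderiv_monomial, Finset.prod_mul_distrib]
      ring
    rw [hL]
    have hR : ∀ β : Fin n → ℕ,
        (∏ i, ((β i).factorial : ℝ))⁻¹
            * eval y (mderiv (fun i => β i + γ i) (monomial d c))
            * ∏ i, (x i - y i) ^ β i
          = (c * ∏ i, (Nat.descFactorial (d i) (γ i) : ℝ))
            * ∏ i, (((d i - γ i).choose (β i) : ℝ) * (x i - y i) ^ (β i)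
                      * y i ^ ((d i - γ i) - β i)) := by
      intro β
      rw [eval_mderiv_monomial]
      rw [← Finset.prod_inv_distrib]
      calc (∏ i, (((β i).factorial : ℝ))⁻¹)
            * (c * ∏ i, ((Nat.descFactorial (d i) (β i + γ i) : ℝ) * y i ^ (d i - (β i + γ i))))
            * ∏ i, (x i - y i) ^ β i
          = c * ((∏ i, (((β i).factorial : ℝ))⁻¹)
              * (∏ i, ((Nat.descFactorial (d i) (β i + γ i) : ℝ) * y i ^ (d i - (β i + γ i))))
              * ∏ i, (x i - y i) ^ β i) := by ring
        _ = c * ∏ i, ((((β i).factorial : ℝ))⁻¹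
              * ((Nat.descFactorial (d i) (β i + γ i) : ℝ) * y i ^ (d i - (β i + γ i)))
              * (x i - y i) ^ β i) := by
              rw [← Finset.prod_mul_distrib, ← Finset.prod_mul_distrib]
        _ = c * ∏ i, ((Nat.descFactorial (d i) (γ i) : ℝ) *
              (((d i - γ i).choose (β i) : ℝ) * (x i - y i) ^ (β i)
                * y i ^ ((d i - γ i) - β i))) := by
              apply congrArg
              apply Finset.prod_congr rfl
              intro i _
              exact hterm (d i) (β i) (γ i) (x i - y i) (y i)
        _ = (c * ∏ i, (Nat.descFactorial (d i) (γ i) : ℝ))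
              * ∏ i, (((d i - γ i).choose (β i) : ℝ) * (x i - y i) ^ (β i)
                        * y i ^ ((d i - γ i) - β i)) := by
              rw [Finset.prod_mul_distrib]
              ring
    rw [Finset.sum_congr rfl (fun β _ => hR β), ← Finset.mul_sum]
    rw [sum_choose_prod k (fun i => d i - γ i)
      (le_trans (Finset.sum_le_sum fun i _ => Nat.sub_le _ _) hdk) x y]
  calc eval x (mderiv γ Q)
      = ∑ d ∈ Q.support, eval x (mderiv γ (monomial d (coeff d Q))) := by
        conv_lhs => rw [as_sum Q]
        rw [mderiv_sum, map_sum]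
    _ = ∑ d ∈ Q.support, ∑ β ∈ multiIndices n k,
          (∏ i, ((β i).factorial : ℝ))⁻¹
            * eval y (mderiv (fun i => β i + γ i) (monomial d (coeff d Q)))
            * ∏ i, (x i - y i) ^ β i := Finset.sum_congr rfl key
    _ = ∑ β ∈ multiIndices n k, ∑ d ∈ Q.support,
          (∏ i, ((β i).factorial : ℝ))⁻¹
            * eval y (mderiv (fun i => β i + γ i) (monomial d (coeff d Q)))
            * ∏ i, (x i - y i) ^ β i := Finset.sum_comm
    _ = ∑ β ∈ multiIndices n k,
          (∏ i, ((β i).factorial : ℝ))⁻¹ * eval y (mderiv (fun i => β i + γ i) Q)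
            * ∏ i, (x i - y i) ^ β i := by
        apply Finset.sum_congr rfl
        intro β _
        conv_rhs => rw [as_sum Q]
        rw [mderiv_sum, map_sum, Finset.mul_sum, Finset.sum_mul]


lemma sum_inv_factorial_le (k : ℕ) :
    ∑ β ∈ multiIndices n k, (∏ i, ((β i).factorial : ℝ))⁻¹ ≤ Real.exp n := by
  have h1 : ∑ β ∈ multiIndices n k, (∏ i, ((β i).factorial : ℝ))⁻¹
      ≤ ∑ β ∈ Fintype.piFinset fun _ : Fin n => Finset.range (k + 1),
          (∏ i, ((β i).factorial : ℝ))⁻¹ := by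
    apply Finset.sum_le_sum_of_subset_of_nonneg (Finset.filter_subset _ _)
    intro β _ _
    positivity
  have h2 : ∑ β ∈ Fintype.piFinset fun _ : Fin n => Finset.range (k + 1),
      (∏ i, ((β i).factorial : ℝ))⁻¹
      = ∏ _i : Fin n, ∑ b ∈ Finset.range (k + 1), ((b.factorial : ℝ))⁻¹ := by
    rw [Finset.prod_univ_sum (fun _ : Fin n => Finset.range (k + 1))
      (fun _ b => ((b.factorial : ℝ))⁻¹)]
    apply Finset.sum_congr rfl
    intro β _
    rw [← Finset.prod_inv_distrib]
  have h3 : ∑ b ∈ Finset.range (k + 1), ((b.factorial : ℝ))⁻¹ ≤ Real.exp 1 := by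
    have h := Real.sum_le_exp_of_nonneg zero_le_one (k + 1)
    simpa [one_div] using h
  calc ∑ β ∈ multiIndices n k, (∏ i, ((β i).factorial : ℝ))⁻¹
      ≤ ∏ _i : Fin n, ∑ b ∈ Finset.range (k + 1), ((b.factorial : ℝ))⁻¹ := h1.trans h2.le
    _ ≤ ∏ _i : Fin n, Real.exp 1 := by
        apply Finset.prod_le_prod
        · intro i _
          positivity
        · intro i _
          exact h3
    _ = Real.exp n := by
        rw [Finset.prod_const, Finset.card_univ, Fintype.card_fin, ← Real.exp_nat_mul, mul_one]

lemma abs_coord_le_norm (v : EuclideanSpace ℝ (Fin n)) (i : Fin n) : |v i| ≤ ‖v‖ := by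
  rw [EuclideanSpace.norm_eq]
  simp only [Real.norm_eq_abs, sq_abs]
  rw [← Real.sqrt_sq_eq_abs]
  apply Real.sqrt_le_sqrt
  exact Finset.single_le_sum (f := fun j => v j ^ 2) (fun j _ => sq_nonneg _) (Finset.mem_univ i)

lemma chord (ω : ℝ → ℝ) (hconc : ConcaveOn ℝ (Set.Ici 0) ω) (h0 : ω 0 = 0)
    {v s : ℝ} (hv : 0 ≤ v) (hvs : v ≤ s) (hs : 0 < s) : v * ω s ≤ s * ω v := by
  have h := hconc.2 (Set.mem_Ici.mpr hs.le) (Set.mem_Ici.mpr (le_refl (0:ℝ)))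
    (show (0:ℝ) ≤ v / s by positivity)
    (show (0:ℝ) ≤ 1 - v / s by
      have : v / s ≤ 1 := (div_le_one hs).mpr hvs
      linarith) (by ring)
  rw [smul_eq_mul, smul_eq_mul, smul_eq_mul, smul_eq_mul, mul_zero, add_zero, h0, mul_zero,
    add_zero] at h
  have h2 : s * ((v / s) * ω s) ≤ s * ω (v / s * s) := by
    exact mul_le_mul_of_nonneg_left h hs.le
  rw [div_mul_cancel₀ _ hs.ne'] at h2
  calc v * ω s = s * ((v / s) * ω s) := by field_simp
    _ ≤ s * ω v := h2

lemma psiInv_spec (ω : ℝ → ℝ) (hcont : ContinuousOn ω (Set.Ici 0))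
    (hmono : StrictMonoOn ω (Set.Ici 0)) (h0 : ω 0 = 0)
    (m : ℕ) (hm : 1 ≤ m) {v : ℝ} (hv : 0 ≤ v) :
    0 ≤ psiInv ω m v ∧ (psiInv ω m v) ^ m * ω (psiInv ω m v) = v := by
  have hω1 : 0 < ω 1 := by
    have := hmono (Set.mem_Ici.mpr (le_refl (0:ℝ))) (Set.mem_Ici.mpr zero_le_one) zero_lt_one
    rwa [h0] at this
  set U : ℝ := max 1 (v / ω 1) with hU
  have hU1 : (1:ℝ) ≤ U := le_max_left _ _
  have hU0 : (0:ℝ) ≤ U := zero_le_one.trans hU1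
  have hgU : v ≤ U ^ m * ω U := by
    have hωU : ω 1 ≤ ω U := by
      rcases eq_or_lt_of_le hU1 with h | h
      · rw [← h]
      · exact (hmono (Set.mem_Ici.mpr zero_le_one) (Set.mem_Ici.mpr hU0) h).le
    have hUm : U ≤ U ^ m := le_self_pow₀ hU1 (by omega)
    calc v = (v / ω 1) * ω 1 := by field_simp
      _ ≤ U * ω 1 := by
          apply mul_le_mul_of_nonneg_right (le_max_right _ _) hω1.le
      _ ≤ U ^ m * ω U := by
          apply mul_le_mul hUm hωU hω1.le (by positivity)
  have hgcont : ContinuousOn (fun s => s ^ m * ω s) (Set.Icc 0 U) :=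
    (continuousOn_pow m).mul (hcont.mono Set.Icc_subset_Ici_self)
  have hiv := intermediate_value_Icc hU0 hgcont
  have hg0 : (fun s => s ^ m * ω s) 0 = 0 := by
    simp [zero_pow (by omega : m ≠ 0)]
  have hmem : v ∈ Set.Icc ((fun s => s ^ m * ω s) 0) ((fun s => s ^ m * ω s) U) := by
    rw [hg0]
    exact ⟨hv, hgU⟩
  obtain ⟨u, hu, hgu⟩ := hiv hmem
  have hex : ∃ a ∈ Set.Ici (0:ℝ), (fun s => s ^ m * ω s) a = v := ⟨u, hu.1, hgu⟩
  exact ⟨Function.invFunOn_mem hex, Function.invFunOn_eq hex⟩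




lemma mderiv_eq_zero_of_totalDegree {k : ℕ} (δ : Fin n → ℕ) (Q : MvPolynomial (Fin n) ℝ)
    (hQ : Q.totalDegree ≤ k) (hδ : k < ∑ i, δ i) : mderiv δ Q = 0 := by
  conv_lhs => rw [as_sum Q]
  rw [mderiv_sum]
  apply Finset.sum_eq_zero
  intro d hd
  apply mderiv_monomial_eq_zero
  have : ∑ i, d i ≤ k := by
    rw [← sum_finsupp_eq]
    exact le_trans (le_totalDegree hd) hQ
  omega

lemma mem_multiIndices {k : ℕ} {β : Fin n → ℕ} :
    β ∈ multiIndices n k ↔ (∀ i, β i ≤ k) ∧ (∑ i, β i) ≤ k := by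
  simp only [multiIndices, Finset.mem_filter, Fintype.mem_piFinset, Finset.mem_range]
  constructor
  · exact fun h => ⟨fun i => by have := h.1 i; omega, h.2⟩
  · exact fun h => ⟨fun i => by have := h.1 i; omega, h.2⟩

lemma le_dOm (ω : ℝ → ℝ) {k : ℕ} (T T' : MvPolynomial (Fin n) ℝ × EuclideanSpace ℝ (Fin n))
    {β : Fin n → ℕ} (hβ : β ∈ multiIndices n k) :
    ω ‖T.2 - T'.2‖ ≤ dOm ω k T T' ∧
      phiOm ω k (∑ i, β i) |eval (fun i => T.2 i) (mderiv β (T.1 - T'.1))| ≤ dOm ω k T T' := by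
  have h := Finset.le_sup' (f := fun α =>
    max (ω ‖T.2 - T'.2‖)
      (max (phiOm ω k (∑ i, α i) |eval (fun i => T.2 i) (mderiv α (T.1 - T'.1))|)
           (phiOm ω k (∑ i, α i) |eval (fun i => T'.2 i) (mderiv α (T.1 - T'.1))|))) hβ
  rw [dOm]
  constructor
  · exact le_trans (le_max_left _ _) h
  · exact le_trans (le_trans (le_max_left _ _) (le_max_right _ _)) h

lemma dOm_nonneg (ω : ℝ → ℝ) (hnn : ∀ t, 0 ≤ t → 0 ≤ ω t) {k : ℕ}
    (T T' : MvPolynomial (Fin n) ℝ × EuclideanSpace ℝ (Fin n)) : 0 ≤ dOm ω k T T' :=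
  le_trans (hnn _ (norm_nonneg _)) (le_dOm ω T T' (multiIndices_nonempty n k).choose_spec).1

lemma link_bound {k : ℕ} (ω : ℝ → ℝ)
    (hnn : ∀ t, 0 ≤ t → 0 ≤ ω t) (hcont : ContinuousOn ω (Set.Ici 0))
    (hmono : StrictMonoOn ω (Set.Ici 0)) (h0 : ω 0 = 0)
    (T T' : MvPolynomial (Fin n) ℝ × EuclideanSpace ℝ (Fin n))
    {β : Fin n → ℕ} (hβ : β ∈ multiIndices n k) {D s : ℝ}
    (hD : dOm ω k T T' ≤ D) (hDs : D ≤ ω s) (hs : 0 ≤ s) :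
    |eval (fun i => T.2 i) (mderiv β (T.1 - T'.1))| ≤ s ^ (k - ∑ i, β i) * D := by
  set a := ∑ i, β i with ha
  set v := |eval (fun i => T.2 i) (mderiv β (T.1 - T'.1))| with hv
  have hv0 : 0 ≤ v := abs_nonneg _
  have hphi : phiOm ω k a v ≤ D := le_trans (le_dOm ω T T' hβ).2 hD
  rcases lt_or_eq_of_le (mem_multiIndices.mp hβ).2 with hak | hak
  · -- a < k
    rw [phiOm, if_pos hak] at hphi
    obtain ⟨hu0, hu⟩ := psiInv_spec ω hcont hmono h0 (k - a) (by omega) hv0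
    set u := psiInv ω (k - a) v
    have hus : u ≤ s := by
      by_contra hc
      push_neg at hc
      have := hmono (Set.mem_Ici.mpr hs) (Set.mem_Ici.mpr hu0) hc
      linarith
    calc v = u ^ (k - a) * ω u := hu.symm
      _ ≤ s ^ (k - a) * D := by
          apply mul_le_mul (pow_le_pow_left₀ hu0 hus _) hphi (hnn u hu0)
          positivity
  · rw [phiOm, if_neg (by omega)] at hphi
    rw [← hak, Nat.sub_self, pow_zero, one_mul]
    exact hphi

lemma keyA {k : ℕ} (hk : 1 ≤ k) (ω : ℝ → ℝ)
    (hnn : ∀ t, 0 ≤ t → 0 ≤ ω t) (hcont : ContinuousOn ω (Set.Ici 0))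
    (hmono : StrictMonoOn ω (Set.Ici 0)) (hconc : ConcaveOn ℝ (Set.Ici 0) ω) (h0 : ω 0 = 0)
    (T T' : MvPolynomial (Fin n) ℝ × EuclideanSpace ℝ (Fin n))
    (hdT : T.1.totalDegree ≤ k) (hdT' : T'.1.totalDegree ≤ k)
    (hdel : delOm ω k T T' ≤ ω ‖T.2 - T'.2‖) {γ : Fin n → ℕ} (hγ : ∑ i, γ i ≤ k) :
    |eval (fun i => T.2 i) (mderiv γ (T.1 - T'.1))| ≤
      Real.exp n * ‖T.2 - T'.2‖ ^ (k - ∑ i, γ i) * ω ‖T.2 - T'.2‖ := by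
  classical
  set t := ‖T.2 - T'.2‖ with htdef
  have ht : 0 ≤ t := norm_nonneg _
  have hωt : 0 ≤ ω t := hnn t ht
  set L := |eval (fun i => T.2 i) (mderiv γ (T.1 - T'.1))| with hL
  -- Step 3 : chain estimate
  have hstep3 : ∀ s, t < s → ∀ ε, 0 < ε → ω t + ε ≤ ω s →
      L ≤ Real.exp n * s ^ (k - ∑ i, γ i) * (ω t + ε) := by
    intro s hts ε hε hεs
    have hs0 : 0 < s := lt_of_le_of_lt ht hts
    have hωs : 0 < ω s := by
      have h1 : ω t < ω s := hmono (Set.mem_Ici.mpr ht) (Set.mem_Ici.mpr hs0.le) hts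
      linarith
    rw [delOm] at hdel
    have hbdd : BddBelow { r | ∃ (m : ℕ)
        (c : ℕ → MvPolynomial (Fin n) ℝ × EuclideanSpace ℝ (Fin n)),
        c 0 = T ∧ c m = T' ∧ (∀ i ≤ m, (c i).1.totalDegree ≤ k) ∧
        r = ∑ i ∈ Finset.range m, dOm ω k (c i) (c (i + 1)) } := by
      refine ⟨0, ?_⟩
      rintro r ⟨N, S, -, -, -, rfl⟩
      exact Finset.sum_nonneg fun j _ => dOm_nonneg ω hnn _ _
    have hne : Set.Nonempty { r | ∃ (m : ℕ)
        (c : ℕ → MvPolynomial (Fin n) ℝ × EuclideanSpace ℝ (Fin n)),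
        c 0 = T ∧ c m = T' ∧ (∀ i ≤ m, (c i).1.totalDegree ≤ k) ∧
        r = ∑ i ∈ Finset.range m, dOm ω k (c i) (c (i + 1)) } := by
      refine ⟨dOm ω k T T', 1, fun j => if j = 0 then T else T', by simp, by simp, ?_, by simp⟩
      intro i hi
      by_cases hi0 : i = 0
      · simp [hi0, hdT]
      · simp [hi0, hdT']
    have hlt : sInf { r | ∃ (m : ℕ)
        (c : ℕ → MvPolynomial (Fin n) ℝ × EuclideanSpace ℝ (Fin n)),
        c 0 = T ∧ c m = T' ∧ (∀ i ≤ m, (c i).1.totalDegree ≤ k) ∧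
        r = ∑ i ∈ Finset.range m, dOm ω k (c i) (c (i + 1)) } < ω t + ε :=
      lt_of_le_of_lt hdel (by linarith)
    obtain ⟨r, hrS, hrlt⟩ := (csInf_lt_iff hbdd hne).mp hlt
    obtain ⟨N, S, hS0, hSN, hSdeg, rfl⟩ := hrS
    set d : ℕ → ℝ := fun j => dOm ω k (S j) (S (j + 1)) with hd
    have hdnn : ∀ j, 0 ≤ d j := fun j => dOm_nonneg ω hnn _ _
    have hsum : ∑ j ∈ Finset.range N, d j ≤ ω t + ε := hrlt.le
    have hdle : ∀ j ∈ Finset.range N, d j ≤ ω s := fun j hj =>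
      le_trans (le_trans (Finset.single_le_sum (fun l _ => hdnn l) hj) hsum) hεs
    have hmem0 : (fun _ : Fin n => 0) ∈ multiIndices n k :=
      mem_multiIndices.mpr ⟨fun _ => Nat.zero_le _, by simp⟩
    have hstepnorm : ∀ j ∈ Finset.range N,
        ‖(S j).2 - (S (j + 1)).2‖ * ω s ≤ s * d j := by
      intro j hj
      have h1 : ω ‖(S j).2 - (S (j + 1)).2‖ ≤ d j := (le_dOm ω _ _ hmem0).1
      have hns : ‖(S j).2 - (S (j + 1)).2‖ ≤ s := by
        by_contra hc
        push_neg at hc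
        have h2 := hmono (Set.mem_Ici.mpr hs0.le) (Set.mem_Ici.mpr (norm_nonneg _)) hc
        have h3 := hdle j hj
        linarith
      calc ‖(S j).2 - (S (j + 1)).2‖ * ω s
          ≤ s * ω ‖(S j).2 - (S (j + 1)).2‖ :=
            chord ω hconc h0 (norm_nonneg _) hns hs0
        _ ≤ s * d j := mul_le_mul_of_nonneg_left h1 hs0.le
    have htot : ∑ j ∈ Finset.range N, ‖(S j).2 - (S (j + 1)).2‖ ≤ s := by
      rw [← mul_le_mul_iff_of_pos_right hωs]
      calc (∑ j ∈ Finset.range N, ‖(S j).2 - (S (j + 1)).2‖) * ω s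
          = ∑ j ∈ Finset.range N, ‖(S j).2 - (S (j + 1)).2‖ * ω s := Finset.sum_mul _ _ _
        _ ≤ ∑ j ∈ Finset.range N, s * d j := Finset.sum_le_sum hstepnorm
        _ = s * ∑ j ∈ Finset.range N, d j := (Finset.mul_sum _ _ _).symm
        _ ≤ s * (ω t + ε) := mul_le_mul_of_nonneg_left hsum hs0.le
        _ ≤ s * ω s := mul_le_mul_of_nonneg_left hεs hs0.le
    have hpos : ∀ j ≤ N, ‖T.2 - (S j).2‖ ≤ s := by
      intro j hj
      rw [← hS0]
      have h1 : dist (S 0).2 (S j).2 ≤ ∑ l ∈ Finset.range j, dist (S l).2 (S (l + 1)).2 :=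
        dist_le_range_sum_dist (fun l => (S l).2) j
      simp only [dist_eq_norm] at h1
      refine le_trans h1 (le_trans ?_ htot)
      exact Finset.sum_le_sum_of_subset_of_nonneg
        (Finset.range_subset_range.mpr hj) (fun l _ _ => norm_nonneg _)
    have htel : T.1 - T'.1 = ∑ j ∈ Finset.range N, ((S j).1 - (S (j + 1)).1) := by
      rw [Finset.sum_range_sub' (fun j => (S j).1) N, hS0, hSN]
    have perlink : ∀ j ∈ Finset.range N,
        |eval (fun i => T.2 i) (mderiv γ ((S j).1 - (S (j + 1)).1))| ≤
          Real.exp n * s ^ (k - ∑ i, γ i) * d j := by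
      intro j hj
      rw [Finset.mem_range] at hj
      have hdegj : ((S j).1 - (S (j + 1)).1).totalDegree ≤ k :=
        le_trans (totalDegree_sub _ _)
          (max_le (hSdeg j (by omega)) (hSdeg (j + 1) (by omega)))
      rw [taylor_mderiv k γ _ hdegj (fun i => T.2 i) (fun i => (S j).2 i)]
      refine le_trans (Finset.abs_sum_le_sum_abs _ _) ?_
      have perβ : ∀ β ∈ multiIndices n k,
          |(∏ i, ((β i).factorial : ℝ))⁻¹
              * eval (fun i => (S j).2 i) (mderiv (fun i => β i + γ i) ((S j).1 - (S (j + 1)).1))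
              * ∏ i, ((fun i => T.2 i) i - (fun i => (S j).2 i) i) ^ β i|
            ≤ (∏ i, ((β i).factorial : ℝ))⁻¹ * (s ^ (k - ∑ i, γ i) * d j) := by
        intro β hβ
        have hfac : (0:ℝ) ≤ (∏ i, ((β i).factorial : ℝ))⁻¹ := by positivity
        have hsumβγ : ∑ i, ((fun i => β i + γ i) i) = (∑ i, β i) + ∑ i, γ i := by
          simp [Finset.sum_add_distrib]
        have factor3 : |∏ i, ((fun i => T.2 i) i - (fun i => (S j).2 i) i) ^ β i|
            ≤ s ^ (∑ i, β i) := by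
          rw [Finset.abs_prod, ← Finset.prod_pow_eq_pow_sum]
          apply Finset.prod_le_prod (fun i _ => abs_nonneg _)
          intro i _
          rw [abs_pow]
          apply pow_le_pow_left₀ (abs_nonneg _)
          have hco : T.2 i - (S j).2 i = (T.2 - (S j).2) i := rfl
          simp only []
          rw [hco]
          exact le_trans (abs_coord_le_norm _ i) (hpos j (by omega))
        rw [abs_mul, abs_mul, abs_of_nonneg hfac]
        by_cases hc : (∑ i, β i) + ∑ i, γ i ≤ k
        · have hmemβγ : (fun i => β i + γ i) ∈ multiIndices n k := by
            apply mem_multiIndices.mpr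
            constructor
            · intro i
              have h5 : β i + γ i ≤ ∑ i', (β i' + γ i') :=
                Finset.single_le_sum (f := fun i' => β i' + γ i')
                  (fun l _ => Nat.zero_le _) (Finset.mem_univ i)
              have h6 : ∑ i', (β i' + γ i') = (∑ i', β i') + ∑ i', γ i' :=
                Finset.sum_add_distrib
              show β i + γ i ≤ k
              omega
            · show (∑ i, (β i + γ i)) ≤ k
              rw [Finset.sum_add_distrib]
              omega
          have h2 := link_bound ω hnn hcont hmono h0 (S j) (S (j + 1)) hmemβγ
            (le_refl (d j)) (hdle j (Finset.mem_range.mpr hj)) hs0.le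
          rw [hsumβγ] at h2
          have h3 : |eval (fun i => (S j).2 i)
                (mderiv (fun i => β i + γ i) ((S j).1 - (S (j + 1)).1))|
              * |∏ i, ((fun i => T.2 i) i - (fun i => (S j).2 i) i) ^ β i|
              ≤ (s ^ (k - ((∑ i, β i) + ∑ i, γ i)) * d j) * s ^ (∑ i, β i) :=
            mul_le_mul h2 factor3 (abs_nonneg _)
              (mul_nonneg (pow_nonneg hs0.le _) (hdnn j))
          have hpow : s ^ (k - ((∑ i, β i) + ∑ i, γ i)) * s ^ (∑ i, β i)
              = s ^ (k - ∑ i, γ i) := by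
            rw [← pow_add]
            congr 1
            omega
          calc (∏ i, ((β i).factorial : ℝ))⁻¹
                * |eval (fun i => (S j).2 i)
                    (mderiv (fun i => β i + γ i) ((S j).1 - (S (j + 1)).1))|
                * |∏ i, ((fun i => T.2 i) i - (fun i => (S j).2 i) i) ^ β i|
              ≤ (∏ i, ((β i).factorial : ℝ))⁻¹
                * ((s ^ (k - ((∑ i, β i) + ∑ i, γ i)) * d j) * s ^ (∑ i, β i)) := by
                rw [mul_assoc]
                exact mul_le_mul_of_nonneg_left h3 hfac
            _ = (∏ i, ((β i).factorial : ℝ))⁻¹ * (s ^ (k - ∑ i, γ i) * d j) := by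
                rw [← hpow]; ring
        · have hz : mderiv (fun i => β i + γ i) ((S j).1 - (S (j + 1)).1) = 0 := by
            apply mderiv_eq_zero_of_totalDegree _ _ hdegj
            rw [hsumβγ]
            omega
          rw [hz]
          simp only [map_zero, abs_zero, mul_zero, zero_mul]
          exact mul_nonneg hfac (mul_nonneg (pow_nonneg hs0.le _) (hdnn j))
      calc ∑ β ∈ multiIndices n k,
            |(∏ i, ((β i).factorial : ℝ))⁻¹
              * eval (fun i => (S j).2 i) (mderiv (fun i => β i + γ i) ((S j).1 - (S (j + 1)).1))
              * ∏ i, ((fun i => T.2 i) i - (fun i => (S j).2 i) i) ^ β i|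
          ≤ ∑ β ∈ multiIndices n k,
              (∏ i, ((β i).factorial : ℝ))⁻¹ * (s ^ (k - ∑ i, γ i) * d j) :=
            Finset.sum_le_sum perβ
        _ = (∑ β ∈ multiIndices n k, (∏ i, ((β i).factorial : ℝ))⁻¹)
              * (s ^ (k - ∑ i, γ i) * d j) := (Finset.sum_mul _ _ _).symm
        _ ≤ Real.exp n * (s ^ (k - ∑ i, γ i) * d j) := by
            apply mul_le_mul_of_nonneg_right (sum_inv_factorial_le k)
            exact mul_nonneg (pow_nonneg hs0.le _) (hdnn j)
        _ = Real.exp n * s ^ (k - ∑ i, γ i) * d j := by ring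
    calc L = |eval (fun i => T.2 i)
          (mderiv γ (∑ j ∈ Finset.range N, ((S j).1 - (S (j + 1)).1)))| := by rw [hL, htel]
      _ = |∑ j ∈ Finset.range N,
            eval (fun i => T.2 i) (mderiv γ ((S j).1 - (S (j + 1)).1))| := by
          rw [mderiv_sum, map_sum]
      _ ≤ ∑ j ∈ Finset.range N,
            |eval (fun i => T.2 i) (mderiv γ ((S j).1 - (S (j + 1)).1))| :=
          Finset.abs_sum_le_sum_abs _ _
      _ ≤ ∑ j ∈ Finset.range N, Real.exp n * s ^ (k - ∑ i, γ i) * d j :=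
          Finset.sum_le_sum perlink
      _ = Real.exp n * s ^ (k - ∑ i, γ i) * ∑ j ∈ Finset.range N, d j := by
          rw [Finset.mul_sum]
      _ ≤ Real.exp n * s ^ (k - ∑ i, γ i) * (ω t + ε) := by
          apply mul_le_mul_of_nonneg_left hsum (by positivity)
  -- Step 2 : ε → 0
  have hstep2 : ∀ s, t < s → L ≤ Real.exp n * s ^ (k - ∑ i, γ i) * ω t := by
    intro s hts
    have hs0 : 0 < s := lt_of_le_of_lt ht hts
    have hωlt : ω t < ω s := hmono (Set.mem_Ici.mpr ht) (Set.mem_Ici.mpr hs0.le) hts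
    set C := Real.exp n * s ^ (k - ∑ i, γ i) with hC
    have hC0 : 0 < C := by positivity
    apply le_of_forall_pos_le_add
    intro δ hδ
    set ε := min (δ / C) (ω s - ω t) with hε
    have hε0 : 0 < ε := lt_min (by positivity) (by linarith)
    have hεs : ω t + ε ≤ ω s := by
      have := min_le_right (δ / C) (ω s - ω t)
      rw [← hε] at this
      linarith
    have h1 := hstep3 s hts ε hε0 hεs
    have h2 : C * ε ≤ δ := by
      have h3 : ε ≤ δ / C := min_le_left _ _
      calc C * ε ≤ C * (δ / C) := mul_le_mul_of_nonneg_left h3 hC0.le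
        _ = δ := mul_div_cancel₀ δ hC0.ne'
    calc L ≤ C * (ω t + ε) := h1
      _ = C * ω t + C * ε := by ring
      _ ≤ C * ω t + δ := by linarith
  -- Step 1 : s → t
  have htend : Filter.Tendsto
      (fun j : ℕ => Real.exp n * (t + 1 / (j + 1)) ^ (k - ∑ i, γ i) * ω t)
      Filter.atTop (nhds (Real.exp n * t ^ (k - ∑ i, γ i) * ω t)) := by
    have h1 : Filter.Tendsto (fun j : ℕ => t + 1 / (j + 1)) Filter.atTop (nhds t) := by
      have h2 := tendsto_one_div_add_atTop_nhds_zero_nat (𝕜 := ℝ)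
      have h3 := (tendsto_const_nhds (x := t) (f := Filter.atTop (α := ℕ))).add h2
      simpa using h3
    exact ((h1.pow _).const_mul _).mul_const _
  refine ge_of_tendsto' htend fun j => ?_
  apply hstep2
  have : (0:ℝ) < 1 / (j + 1) := by positivity
  linarith


end ChainAux

open ChainAux

/-- under the chain hypotheses of Lemma 2.6, for every multi-index `α`
with `|α| ≤ k`,
`|D^α(P₀ − P_m)(x₀)| ≤ e^{2n} λ^{k+1} ‖x₀ − x_m‖^{k−|α|} ω(‖x₀ − x_m‖)`. -/
theorem chain_deriv_bound {n k : ℕ} (hk : 1 ≤ k)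
    (ω : ℝ → ℝ)
    (hnn : ∀ t, 0 ≤ t → 0 ≤ ω t)
    (hcont : ContinuousOn ω (Set.Ici 0))
    (hmono : StrictMonoOn ω (Set.Ici 0))
    (hconc : ConcaveOn ℝ (Set.Ici 0) ω)
    (h0 : ω 0 = 0)
    (m : ℕ) (c : ℕ → MvPolynomial (Fin n) ℝ × EuclideanSpace ℝ (Fin n))
    (hdeg : ∀ i ≤ m, (c i).1.totalDegree ≤ k)
    (hstep : ∀ i < m, delOm ω k (c i) (c (i + 1)) ≤ ω ‖(c i).2 - (c (i + 1)).2‖)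
    (l : ℝ) (hl : 1 ≤ l)
    (hlen : ∑ i ∈ Finset.range m, ‖(c i).2 - (c (i + 1)).2‖ ≤ l * ‖(c 0).2 - (c m).2‖)
    (hωlen : ∑ i ∈ Finset.range m, ω ‖(c i).2 - (c (i + 1)).2‖ ≤ l * ω ‖(c 0).2 - (c m).2‖)
    (α : Fin n → ℕ) (hα : (∑ i, α i) ≤ k) :
    |MvPolynomial.eval (fun j => (c 0).2 j) (mderiv α ((c 0).1 - (c m).1))| ≤
      Real.exp (2 * n) * l ^ (k + 1) * ‖(c 0).2 - (c m).2‖ ^ (k - ∑ i, α i) *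
        ω ‖(c 0).2 - (c m).2‖ := by
  classical
  have hr : (0:ℝ) ≤ ‖(c 0).2 - (c m).2‖ := norm_nonneg _
  have hωr : 0 ≤ ω ‖(c 0).2 - (c m).2‖ := hnn _ hr
  set r := ‖(c 0).2 - (c m).2‖ with hrdef
  set a := ∑ i, α i with hadef
  have hl0 : (0:ℝ) < l := lt_of_lt_of_le zero_lt_one hl
  set L := l * r with hLdef
  have hL0 : 0 ≤ L := mul_nonneg hl0.le hr
  have htle : ∀ i ∈ Finset.range m, ‖(c i).2 - (c (i + 1)).2‖ ≤ L := fun i hi =>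
    le_trans (Finset.single_le_sum (f := fun i => ‖(c i).2 - (c (i + 1)).2‖)
      (fun _ _ => norm_nonneg _) hi) hlen
  have hxle : ∀ i ≤ m, ‖(c 0).2 - (c i).2‖ ≤ L := by
    intro i hi
    have h1 := dist_le_range_sum_dist (fun j => (c j).2) i
    simp only [dist_eq_norm] at h1
    exact le_trans h1 (le_trans (Finset.sum_le_sum_of_subset_of_nonneg
      (Finset.range_subset_range.mpr hi) (fun _ _ _ => norm_nonneg _)) hlen)
  have htel : (c 0).1 - (c m).1 = ∑ i ∈ Finset.range m, ((c i).1 - (c (i + 1)).1) := by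
    rw [Finset.sum_range_sub' (fun j => (c j).1) m]
  have peri : ∀ i ∈ Finset.range m,
      |eval (fun j => (c 0).2 j) (mderiv α ((c i).1 - (c (i + 1)).1))|
        ≤ Real.exp n * Real.exp n * L ^ (k - a) * ω ‖(c i).2 - (c (i + 1)).2‖ := by
    intro i hi
    have hi' : i < m := Finset.mem_range.mp hi
    have hωti : 0 ≤ ω ‖(c i).2 - (c (i + 1)).2‖ := hnn _ (norm_nonneg _)
    have hdegi : ((c i).1 - (c (i + 1)).1).totalDegree ≤ k :=
      le_trans (totalDegree_sub _ _)
        (max_le (hdeg i (by omega)) (hdeg (i + 1) (by omega)))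
    rw [taylor_mderiv k α _ hdegi (fun j => (c 0).2 j) (fun j => (c i).2 j)]
    refine le_trans (Finset.abs_sum_le_sum_abs _ _) ?_
    have perβ : ∀ β ∈ multiIndices n k,
        |(∏ j, ((β j).factorial : ℝ))⁻¹
            * eval (fun j => (c i).2 j) (mderiv (fun j => β j + α j) ((c i).1 - (c (i + 1)).1))
            * ∏ j, ((fun j => (c 0).2 j) j - (fun j => (c i).2 j) j) ^ β j|
          ≤ (∏ j, ((β j).factorial : ℝ))⁻¹
              * (Real.exp n * L ^ (k - a) * ω ‖(c i).2 - (c (i + 1)).2‖) := by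
      intro β hβ
      have hfac : (0:ℝ) ≤ (∏ j, ((β j).factorial : ℝ))⁻¹ := by positivity
      have hsumβα : ∑ j, ((fun j => β j + α j) j) = (∑ j, β j) + a := by
        simp [Finset.sum_add_distrib, hadef]
      have factor3 : |∏ j, ((fun j => (c 0).2 j) j - (fun j => (c i).2 j) j) ^ β j|
          ≤ L ^ (∑ j, β j) := by
        rw [Finset.abs_prod, ← Finset.prod_pow_eq_pow_sum]
        apply Finset.prod_le_prod (fun j _ => abs_nonneg _)
        intro j _
        rw [abs_pow]
        apply pow_le_pow_left₀ (abs_nonneg _)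
        have hco : (c 0).2 j - (c i).2 j = ((c 0).2 - (c i).2) j := rfl
        simp only []
        rw [hco]
        exact le_trans (abs_coord_le_norm _ j) (hxle i (by omega))
      rw [abs_mul, abs_mul, abs_of_nonneg hfac]
      by_cases hc : (∑ j, β j) + a ≤ k
      · have h2 := keyA hk ω hnn hcont hmono hconc h0 (c i) (c (i + 1))
          (hdeg i (by omega)) (hdeg (i + 1) (by omega)) (hstep i hi')
          (γ := fun j => β j + α j) (by rw [hsumβα]; exact hc)
        rw [hsumβα] at h2
        have h2' : |eval (fun j => (c i).2 j)
              (mderiv (fun j => β j + α j) ((c i).1 - (c (i + 1)).1))|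
            ≤ Real.exp n * L ^ (k - ((∑ j, β j) + a)) * ω ‖(c i).2 - (c (i + 1)).2‖ := by
          refine le_trans h2 ?_
          apply mul_le_mul_of_nonneg_right _ hωti
          exact mul_le_mul_of_nonneg_left
            (pow_le_pow_left₀ (norm_nonneg _) (htle i hi) _) (Real.exp_nonneg _)
        have h3 : |eval (fun j => (c i).2 j)
              (mderiv (fun j => β j + α j) ((c i).1 - (c (i + 1)).1))|
            * |∏ j, ((fun j => (c 0).2 j) j - (fun j => (c i).2 j) j) ^ β j|
            ≤ (Real.exp n * L ^ (k - ((∑ j, β j) + a)) * ω ‖(c i).2 - (c (i + 1)).2‖)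
              * L ^ (∑ j, β j) :=
          mul_le_mul h2' factor3 (abs_nonneg _)
            (by positivity)
        have hpow : L ^ (k - ((∑ j, β j) + a)) * L ^ (∑ j, β j) = L ^ (k - a) := by
          rw [← pow_add]
          congr 1
          omega
        calc (∏ j, ((β j).factorial : ℝ))⁻¹
              * |eval (fun j => (c i).2 j)
                  (mderiv (fun j => β j + α j) ((c i).1 - (c (i + 1)).1))|
              * |∏ j, ((fun j => (c 0).2 j) j - (fun j => (c i).2 j) j) ^ β j|
            ≤ (∏ j, ((β j).factorial : ℝ))⁻¹
              * ((Real.exp n * L ^ (k - ((∑ j, β j) + a)) * ω ‖(c i).2 - (c (i + 1)).2‖)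
                  * L ^ (∑ j, β j)) := by
              rw [mul_assoc]
              exact mul_le_mul_of_nonneg_left h3 hfac
          _ = (∏ j, ((β j).factorial : ℝ))⁻¹
              * (Real.exp n * L ^ (k - a) * ω ‖(c i).2 - (c (i + 1)).2‖) := by
              rw [← hpow]; ring
      · have hz : mderiv (fun j => β j + α j) ((c i).1 - (c (i + 1)).1) = 0 := by
          apply mderiv_eq_zero_of_totalDegree _ _ hdegi
          rw [hsumβα]
          omega
        rw [hz]
        simp only [map_zero, abs_zero, mul_zero, zero_mul]
        positivity
    calc ∑ β ∈ multiIndices n k,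
          |(∏ j, ((β j).factorial : ℝ))⁻¹
            * eval (fun j => (c i).2 j) (mderiv (fun j => β j + α j) ((c i).1 - (c (i + 1)).1))
            * ∏ j, ((fun j => (c 0).2 j) j - (fun j => (c i).2 j) j) ^ β j|
        ≤ ∑ β ∈ multiIndices n k,
            (∏ j, ((β j).factorial : ℝ))⁻¹
              * (Real.exp n * L ^ (k - a) * ω ‖(c i).2 - (c (i + 1)).2‖) :=
          Finset.sum_le_sum perβ
      _ = (∑ β ∈ multiIndices n k, (∏ j, ((β j).factorial : ℝ))⁻¹)
            * (Real.exp n * L ^ (k - a) * ω ‖(c i).2 - (c (i + 1)).2‖) :=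
          (Finset.sum_mul _ _ _).symm
      _ ≤ Real.exp n * (Real.exp n * L ^ (k - a) * ω ‖(c i).2 - (c (i + 1)).2‖) := by
          apply mul_le_mul_of_nonneg_right (sum_inv_factorial_le k)
          positivity
      _ = Real.exp n * Real.exp n * L ^ (k - a) * ω ‖(c i).2 - (c (i + 1)).2‖ := by ring
  have hexp : Real.exp (2 * (n:ℝ)) = Real.exp n * Real.exp n := by
    rw [two_mul, Real.exp_add]
  have hpowl : l ^ (k - a + 1) ≤ l ^ (k + 1) := pow_le_pow_right₀ hl (by omega)
  calc |eval (fun j => (c 0).2 j) (mderiv α ((c 0).1 - (c m).1))|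
      = |∑ i ∈ Finset.range m,
          eval (fun j => (c 0).2 j) (mderiv α ((c i).1 - (c (i + 1)).1))| := by
        rw [htel, mderiv_sum, map_sum]
    _ ≤ ∑ i ∈ Finset.range m,
          |eval (fun j => (c 0).2 j) (mderiv α ((c i).1 - (c (i + 1)).1))| :=
        Finset.abs_sum_le_sum_abs _ _
    _ ≤ ∑ i ∈ Finset.range m,
          Real.exp n * Real.exp n * L ^ (k - a) * ω ‖(c i).2 - (c (i + 1)).2‖ :=
        Finset.sum_le_sum peri
    _ = Real.exp n * Real.exp n * L ^ (k - a)
          * ∑ i ∈ Finset.range m, ω ‖(c i).2 - (c (i + 1)).2‖ := by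
        rw [Finset.mul_sum]
    _ ≤ Real.exp n * Real.exp n * L ^ (k - a) * (l * ω r) := by
        apply mul_le_mul_of_nonneg_left hωlen
        positivity
    _ = Real.exp (2 * (n:ℝ)) * l ^ (k - a + 1) * r ^ (k - a) * ω r := by
        rw [hexp, hLdef, mul_pow, pow_succ]
        ring
    _ ≤ Real.exp (2 * (n:ℝ)) * l ^ (k + 1) * r ^ (k - a) * ω r := by
        apply mul_le_mul_of_nonneg_right _ hωr
        apply mul_le_mul_of_nonneg_right _ (pow_nonneg hr _)
        exact mul_le_mul_of_nonneg_left hpowl (Real.exp_nonneg _)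
end
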